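/- arXiv:2211.04914 — 8 statements merged into one kernel-verified Lean document; each statement's English description precedes it below -/
import Mathlib

section
/- The number of Dyck paths with air pockets of length n satisfies the recurrence implied by the functional equation A(x) = x^2 + x^2 A(x) + x A(x) + x A(x)^2; equivalently, the sequence a_n (with a_0 = a_1 = 0, a_2 = 1) satisfies a_n = a_{n-2} + a_{n-1} + sum_{k=2}^{n-1} a_k * a_{n-1-k} for all n >= 3, plus the extra term [n = 2]. -/
/-!
Every DAP factors uniquely as `q ++ r` with `q` primitive (it meets the x-axis only at its
endpoints) and `r` a possibly empty DAP. The only primitive DAP of length 2 is `U D₁`. For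
`m ≥ 3`, prepending an up-step and lengthening the final down-step by one is a bijection from
DAPs of length `m - 1` onto primitive DAPs of length `m`: the last down-step of a DAP follows an
up-step, so lengthening it keeps the path valid and lifts every interior point strictly above the
axis. Summing over the length `m` of the primitive factor gives
`a_n = a_{n-2} + ∑_{m=3}^{n} a_{m-1} (a_{n-m} + [m = n])`, the recurrence after a shift of index.
-/

open PowerSeries

/-- A valid step sequence: each step is an up-step `1` or a down-step `-k` (`k ≥ 1`),
and no two down-steps are consecutive. -/
def GoodSteps (p : List ℤ) : Prop :=
  (∀ s ∈ p, s = 1 ∨ s ≤ -1) ∧ List.Chain' (fun a b => a = 1 ∨ b = 1) p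

/-- A Dyck path with air pockets: nonempty, valid steps, ends on the x-axis,
stays weakly above the x-axis. -/
def IsDAP (p : List ℤ) : Prop :=
  p ≠ [] ∧ GoodSteps p ∧ p.sum = 0 ∧ ∀ i, 0 ≤ (p.take i).sum

/-- A grand Dyck path with air pockets: valid steps, ends on the x-axis
(possibly going below it); the empty path is allowed. -/
def IsGDAP (p : List ℤ) : Prop := GoodSteps p ∧ p.sum = 0

/-- Number of DAP of length `n`. -/
noncomputable def dapCount (n : ℕ) : ℕ :=
  Nat.card {p : List ℤ // IsDAP p ∧ p.length = n}

theorem goodSteps_iff {p : List ℤ} :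
    GoodSteps p ↔ (∀ s ∈ p, s = 1 ∨ s ≤ -1) ∧ p.IsChain (fun a b => a = 1 ∨ b = 1) :=
  Iff.rfl

theorem GoodSteps.infix {l₁ l₂ : List ℤ} (h : GoodSteps l₂) (hl : l₁ <:+: l₂) : GoodSteps l₁ :=
  ⟨fun s hs => h.1 s (hl.subset hs), h.2.infix hl⟩

theorem GoodSteps.cons_one {l : List ℤ} (h : GoodSteps l) : GoodSteps (1 :: l) :=
  ⟨by simpa using h.1, h.2.cons fun _ _ => Or.inl rfl⟩

theorem GoodSteps.append_cons_one {l₁ l₂ : List ℤ} (h₁ : GoodSteps l₁) (h₂ : GoodSteps (1 :: l₂)) :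
    GoodSteps (l₁ ++ 1 :: l₂) :=
  ⟨by simpa [or_imp, forall_and] using And.intro h₁.1 h₂.1,
    h₁.2.append h₂.2 fun _ _ _ hy => Or.inr (by simpa [eq_comm] using hy)⟩

theorem goodSteps_append_pair_one_iff {u : List ℤ} {e : ℤ} :
    GoodSteps (u ++ [1, e]) ↔ GoodSteps (u ++ [1]) ∧ (e = 1 ∨ e ≤ -1) := by
  simp only [goodSteps_iff, List.isChain_append_cons_cons, List.isChain_singleton]
  simp [or_imp, forall_and]
  tauto

theorem GoodSteps.exists_eq_append_one {v : List ℤ} {e : ℤ} (h : GoodSteps (v ++ [e]))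
    (he : e ≤ -1) (hv : v ≠ []) : ∃ u, v = u ++ [1] := by
  obtain ⟨u, x, rfl⟩ := List.eq_nil_or_concat' v |>.resolve_left hv
  have hxe : List.IsChain (fun a b : ℤ => a = 1 ∨ b = 1) [x, e] := h.2.infix ⟨u, [], by simp⟩
  exact ⟨u, by grind [List.isChain_pair]⟩

theorem GoodSteps.append_singleton_of_le_neg_one {v : List ℤ} {e e' : ℤ}
    (h : GoodSteps (v ++ [e])) (he : e ≤ -1) (he' : e' ≤ -1) : GoodSteps (v ++ [e']) := by
  rcases eq_or_ne v [] with rfl | hv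
  · exact ⟨by simpa using Or.inr he', List.isChain_singleton _⟩
  obtain ⟨u, rfl⟩ := h.exists_eq_append_one he hv
  simp only [List.append_assoc, List.cons_append, List.nil_append] at h ⊢
  exact goodSteps_append_pair_one_iff.2 ⟨(goodSteps_append_pair_one_iff.1 h).1, Or.inr he'⟩

def IsDAP₀ (p : List ℤ) : Prop :=
  GoodSteps p ∧ p.sum = 0 ∧ ∀ i, 0 ≤ (p.take i).sum

theorem IsDAP.isDAP₀ {p : List ℤ} (h : IsDAP p) : IsDAP₀ p :=
  h.2

theorem IsDAP₀.eq_one_cons {p : List ℤ} (h : IsDAP₀ p) (hp : p ≠ []) : ∃ t, p = 1 :: t := by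
  obtain ⟨a, t, rfl⟩ := List.exists_cons_of_ne_nil hp
  have ha : 0 ≤ a := by simpa using h.2.2 1
  rcases h.1.1 a (by simp) with rfl | ha' <;> [exact ⟨t, rfl⟩; omega]

theorem IsDAP₀.append {q r : List ℤ} (hq : IsDAP₀ q) (hr : IsDAP₀ r) : IsDAP₀ (q ++ r) := by
  refine ⟨?_, by simp [hq.2.1, hr.2.1], fun i => ?_⟩
  · rcases eq_or_ne r [] with rfl | hr₀
    · simpa using hq.1
    obtain ⟨t, rfl⟩ := hr.eq_one_cons hr₀
    exact hq.1.append_cons_one hr.1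
  · rw [List.take_append, List.sum_append]
    exact add_nonneg (hq.2.2 i) (hr.2.2 _)

theorem IsDAP₀.take_of_sum_take_eq_zero {p : List ℤ} {m : ℕ} (h : IsDAP₀ p)
    (hm : (p.take m).sum = 0) : IsDAP₀ (p.take m) :=
  ⟨h.1.infix (List.take_prefix m p).isInfix, hm, fun i => by rw [List.take_take]; exact h.2.2 _⟩

theorem IsDAP₀.drop_of_sum_take_eq_zero {p : List ℤ} {m : ℕ} (h : IsDAP₀ p)
    (hm : (p.take m).sum = 0) : IsDAP₀ (p.drop m) := by
  refine ⟨h.1.infix (List.drop_suffix m p).isInfix, ?_, fun i => ?_⟩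
  · have := congrArg List.sum (List.take_append_drop m p)
    rw [List.sum_append, hm, h.2.1] at this
    omega
  · have := h.2.2 (m + i)
    rwa [List.take_add, List.sum_append, hm, zero_add] at this

theorem IsDAP₀.neg_length_le {p : List ℤ} (h : IsDAP₀ p) {x : ℤ} (hx : x ∈ p) :
    -(p.length : ℤ) ≤ x := by
  obtain ⟨u, v, rfl⟩ := List.append_of_mem hx
  have hu : u.sum ≤ u.length := by
    simpa using u.sum_le_card_nsmul 1 fun s hs => by
      rcases h.1.1 s (by simp [hs]) with h' | h' <;> omega
  have hux : 0 ≤ u.sum + x := by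
    have := h.2.2 (u.length + 1)
    rw [List.take_append, List.take_of_length_le (by omega), Nat.add_sub_cancel_left] at this
    simpa using this
  simp only [List.length_append, List.length_cons]
  omega

theorem sum_take_append_singleton (v : List ℤ) (e : ℤ) (i : ℕ) :
    ((v ++ [e]).take i).sum = if i ≤ v.length then (v.take i).sum else v.sum + e := by
  split_ifs with hi
  · rw [List.take_append_of_le_length hi]
  · rw [List.take_of_length_le (by rw [List.length_append, List.length_singleton]; omega),
      List.sum_append, List.sum_singleton]

theorem isDAP_append_singleton_iff {v : List ℤ} {e : ℤ} :
    IsDAP (v ++ [e]) ↔ GoodSteps (v ++ [e]) ∧ v.sum + e = 0 ∧ ∀ i, 0 ≤ (v.take i).sum := by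
  simp only [IsDAP, ne_eq, List.append_eq_nil_iff, List.cons_ne_self, and_false,
    not_false_eq_true, List.sum_append, List.sum_singleton, true_and, and_congr_right_iff,
    sum_take_append_singleton]
  refine fun _ hsum => ⟨fun h i => ?_, fun h i => ?_⟩
  · rcases le_or_gt i v.length with hi | hi
    · simpa [hi] using h i
    · simpa [List.take_of_length_le hi.le] using h v.length
  · split_ifs <;> [exact h i; omega]

def IsPrimDAP (q : List ℤ) : Prop :=
  IsDAP q ∧ ∀ i, 0 < i → i < q.length → 0 < (q.take i).sum

theorem isPrimDAP_one_cons_append_singleton_iff {v : List ℤ} {e : ℤ} :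
    IsPrimDAP (1 :: (v ++ [e])) ↔
      GoodSteps (1 :: (v ++ [e])) ∧ 1 + v.sum + e = 0 ∧ ∀ i, 0 ≤ (v.take i).sum := by
  have hsum_take (j : ℕ) : ((1 :: (v ++ [e])).take (j + 1)).sum =
      1 + if j ≤ v.length then (v.take j).sum else v.sum + e := by
    rw [List.take_succ_cons, List.sum_cons, sum_take_append_singleton]
  simp only [IsPrimDAP, IsDAP, ne_eq, reduceCtorEq, not_false_eq_true, List.sum_cons,
    List.sum_append, List.sum_nil, add_zero, true_and, List.length_cons, List.length_append,
    List.length_nil, ← add_assoc]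
  constructor
  · rintro ⟨⟨hg, hsum, -⟩, hpos⟩
    refine ⟨hg, hsum, fun i => ?_⟩
    rcases le_or_gt i v.length with hi | hi
    · have := hpos (i + 1) (by omega) (by omega)
      rw [hsum_take, if_pos hi] at this
      omega
    · have := hpos (v.length + 1) (by omega) (by omega)
      rw [hsum_take, if_pos le_rfl, List.take_length] at this
      rw [List.take_of_length_le hi.le]
      omega
  · rintro ⟨hg, hsum, hv⟩
    refine ⟨⟨hg, hsum, fun i => ?_⟩, fun i hi₀ hi => ?_⟩
    · rcases i with _ | j
      · simp
      · rw [hsum_take]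
        split_ifs <;> [linarith [hv j]; omega]
    · obtain ⟨j, rfl⟩ : ∃ j, i = j + 1 := ⟨i - 1, by omega⟩
      rw [hsum_take, if_pos (by omega)]
      linarith [hv j]

def elevate (p : List ℤ) : List ℤ := 1 :: p.modifyLast (· - 1)

theorem elevate_append_singleton (v : List ℤ) (e : ℤ) :
    elevate (v ++ [e]) = 1 :: (v ++ [e - 1]) := by
  rw [elevate, List.modifyLast_concat]

theorem length_elevate (p : List ℤ) : (elevate p).length = p.length + 1 := by
  rcases List.eq_nil_or_concat' p with rfl | ⟨v, e, rfl⟩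
  · rfl
  · simp [elevate_append_singleton]

theorem elevate_injective : Function.Injective elevate := by
  intro p₁ p₂ h
  have hlen : p₁.length = p₂.length := by simpa [length_elevate] using congrArg List.length h
  rcases List.eq_nil_or_concat' p₁ with rfl | ⟨v₁, e₁, rfl⟩
  · exact (List.length_eq_zero_iff.1 hlen.symm).symm
  rcases List.eq_nil_or_concat' p₂ with rfl | ⟨v₂, e₂, rfl⟩
  · simp at hlen
  rw [elevate_append_singleton, elevate_append_singleton] at h
  obtain ⟨rfl, he⟩ := List.append_inj' (List.cons_injective h) rfl
  simp_all

theorem IsDAP.isPrimDAP_elevate {p : List ℤ} (h : IsDAP p) : IsPrimDAP (elevate p) := by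
  obtain ⟨v, e, rfl⟩ := List.eq_nil_or_concat' p |>.resolve_left h.1
  obtain ⟨hg, hsum, hv⟩ := isDAP_append_singleton_iff.1 h
  have hv₀ : 0 ≤ v.sum := by simpa using hv v.length
  have he : e ≤ -1 := by rcases hg.1 e (by simp) with rfl | he <;> omega
  rw [elevate_append_singleton, isPrimDAP_one_cons_append_singleton_iff]
  exact ⟨(hg.append_singleton_of_le_neg_one he (by omega)).cons_one, by omega, hv⟩

theorem IsPrimDAP.exists_isDAP_elevate_eq {q : List ℤ} (h : IsPrimDAP q) (hq : 3 ≤ q.length) :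
    ∃ p, IsDAP p ∧ elevate p = q := by
  obtain ⟨t, rfl⟩ := h.1.isDAP₀.eq_one_cons h.1.1
  obtain ⟨v, e, rfl⟩ := List.eq_nil_or_concat' t |>.resolve_left (by rintro rfl; simp at hq)
  obtain ⟨hg, hsum, hv⟩ := isPrimDAP_one_cons_append_singleton_iff.1 h
  have hv₀ : 0 ≤ v.sum := by simpa using hv v.length
  have hg' : GoodSteps (v ++ [e]) := hg.infix (List.suffix_cons 1 _).isInfix
  obtain ⟨u, rfl⟩ := hg'.exists_eq_append_one (by omega) (by rintro rfl; simp at hq)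
  have hu : 0 ≤ u.sum := by simpa using hv u.length
  simp only [List.sum_append, List.sum_singleton] at hsum
  refine ⟨u ++ [1] ++ [e + 1], isDAP_append_singleton_iff.2
    ⟨hg'.append_singleton_of_le_neg_one (by omega) (by omega), ?_, hv⟩, ?_⟩
  · simp only [List.sum_append, List.sum_singleton]
    omega
  · rw [elevate_append_singleton, add_sub_cancel_right]

theorem IsDAP.exists_isPrimDAP_append {p : List ℤ} (h : IsDAP p) :
    ∃ q r, IsPrimDAP q ∧ IsDAP₀ r ∧ q ++ r = p := by
  have hret : ∃ m, 0 < m ∧ (p.take m).sum = 0 :=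
    ⟨p.length, List.length_pos_iff.2 h.1, by rw [List.take_length]; exact h.2.2.1⟩
  classical
  set m := Nat.find hret
  obtain ⟨hm₀, hm⟩ : 0 < m ∧ (p.take m).sum = 0 := Nat.find_spec hret
  have hmp : m ≤ p.length := Nat.find_min' hret ⟨List.length_pos_iff.2 h.1, by
    rw [List.take_length]; exact h.2.2.1⟩
  have h₀ := h.isDAP₀
  refine ⟨p.take m, p.drop m, ⟨⟨?_, h₀.take_of_sum_take_eq_zero hm⟩, fun i hi₀ hi => ?_⟩,
    h₀.drop_of_sum_take_eq_zero hm, List.take_append_drop m p⟩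
  · rw [← List.length_pos_iff, List.length_take]
    omega
  · rw [List.length_take] at hi
    rw [List.take_take, min_eq_left (by omega)]
    exact (h.2.2.2 i).lt_of_ne' fun hzero => Nat.find_min hret (by omega) ⟨hi₀, hzero⟩

theorem IsDAP.append_isDAP₀ {q r : List ℤ} (hq : IsDAP q) (hr : IsDAP₀ r) : IsDAP (q ++ r) :=
  ⟨by simp [hq.1], hq.isDAP₀.append hr⟩

theorem IsPrimDAP.length_le_of_append_eq {q₁ q₂ r₁ r₂ : List ℤ} (h₁ : IsDAP q₁)
    (h₂ : IsPrimDAP q₂) (he : q₁ ++ r₁ = q₂ ++ r₂) : q₂.length ≤ q₁.length := by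
  by_contra! hlt
  have hpre : q₂.take q₁.length = q₁ := by
    rw [← List.take_append_of_le_length hlt.le (l₂ := r₂), ← he, List.take_left' rfl]
  have := h₂.2 q₁.length (List.length_pos_iff.2 h₁.1) hlt
  rw [hpre, h₁.2.2.1] at this
  exact this.false

theorem IsDAP.two_le_length {p : List ℤ} (h : IsDAP p) : 2 ≤ p.length := by
  obtain ⟨t, rfl⟩ := h.isDAP₀.eq_one_cons h.1
  have ht : t ≠ [] := by rintro rfl; simpa using h.2.2.1
  simpa [Nat.one_le_iff_ne_zero] using ht

theorem finite_setOf_length_eq_and_forall_mem {α : Type*} {s : Set α} (hs : s.Finite) (n : ℕ) :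
    {l : List α | l.length = n ∧ ∀ x ∈ l, x ∈ s}.Finite := by
  have := hs.to_subtype
  refine ((List.finite_length_eq s n).image (List.map (↑))).subset ?_
  rintro l ⟨hl, hls⟩
  lift l to List s using hls
  exact ⟨l, by simpa using hl, rfl⟩

def dapSet (n : ℕ) : Set (List ℤ) := {p | IsDAP p ∧ p.length = n}

def dap₀Set (n : ℕ) : Set (List ℤ) := {p | IsDAP₀ p ∧ p.length = n}

def primDapSet (n : ℕ) : Set (List ℤ) := {q | IsPrimDAP q ∧ q.length = n}

theorem dapCount_eq_ncard (n : ℕ) : dapCount n = (dapSet n).ncard :=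
  Nat.card_coe_set_eq _

theorem dap₀Set_finite (n : ℕ) : (dap₀Set n).Finite := by
  refine (finite_setOf_length_eq_and_forall_mem (Set.finite_Icc (-(n : ℤ)) 1) n).subset ?_
  rintro p ⟨hp, rfl⟩
  refine ⟨rfl, fun x hx => ⟨hp.neg_length_le hx, ?_⟩⟩
  rcases hp.1.1 x hx with h | h <;> omega

theorem primDapSet_finite (n : ℕ) : (primDapSet n).Finite :=
  (dap₀Set_finite n).subset fun _ ⟨hq, hn⟩ => ⟨hq.1.isDAP₀, hn⟩

theorem dapSet_eq_biUnion (n : ℕ) :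
    dapSet n = ⋃ m ∈ Set.Icc 2 n, Set.image2 (· ++ ·) (primDapSet m) (dap₀Set (n - m)) := by
  ext p
  simp only [Set.mem_iUnion, Set.mem_image2, Set.mem_Icc, exists_prop]
  constructor
  · rintro ⟨hp, rfl⟩
    obtain ⟨q, r, hq, hr, rfl⟩ := hp.exists_isPrimDAP_append
    exact ⟨q.length, ⟨hq.1.two_le_length, by simp⟩, q, ⟨hq, rfl⟩, r, ⟨hr, by simp⟩, rfl⟩
  · rintro ⟨m, ⟨-, hmn⟩, q, ⟨hq, rfl⟩, r, ⟨hr, hrn⟩, rfl⟩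
    exact ⟨hq.1.append_isDAP₀ hr, by rw [List.length_append]; omega⟩

theorem ncard_image2_append {α : Type*} {P E : Set (List α)} {m : ℕ}
    (hP : ∀ p ∈ P, p.length = m) :
    (Set.image2 (· ++ ·) P E).ncard = P.ncard * E.ncard := by
  rw [← Set.image_uncurry_prod, Set.InjOn.ncard_image, Set.ncard_prod]
  rintro ⟨q₁, r₁⟩ ⟨hq₁, -⟩ ⟨q₂, r₂⟩ ⟨hq₂, -⟩ he
  obtain ⟨rfl, rfl⟩ := List.append_inj he (by rw [hP _ hq₁, hP _ hq₂])
  rfl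

theorem ncard_dapSet_eq_sum (n : ℕ) :
    (dapSet n).ncard =
      ∑ m ∈ Finset.Icc 2 n, (primDapSet m).ncard * (dap₀Set (n - m)).ncard := by
  rw [dapSet_eq_biUnion, ← Finset.coe_Icc, Set.Finite.ncard_biUnion (Finset.finite_toSet _),
    finsum_mem_coe_finset]
  · exact Finset.sum_congr rfl fun m _ => ncard_image2_append fun _ hq => hq.2
  · exact fun m _ => (primDapSet_finite m).image2 _ (dap₀Set_finite _)
  · rintro m₁ - m₂ - hne
    refine Set.disjoint_left.2 ?_
    rintro _ ⟨q₁, ⟨hq₁, rfl⟩, r₁, -, rfl⟩ ⟨q₂, ⟨hq₂, rfl⟩, r₂, -, he⟩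
    exact hne (le_antisymm (hq₁.length_le_of_append_eq hq₂.1 he)
      (hq₂.length_le_of_append_eq hq₁.1 he.symm))

theorem primDapSet_two : primDapSet 2 = {[1, -1]} := by
  ext q
  refine ⟨fun ⟨hq, hlen⟩ => ?_, ?_⟩
  · obtain ⟨t, rfl⟩ := hq.1.isDAP₀.eq_one_cons hq.1.1
    obtain ⟨e, rfl⟩ := List.length_eq_one_iff.1 (by simpa using hlen)
    obtain ⟨-, hsum, -⟩ := isPrimDAP_one_cons_append_singleton_iff (v := []).1 hq
    rw [List.sum_nil] at hsum
    rw [Set.mem_singleton_iff, show e = -1 by omega]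
  · rintro rfl
    refine ⟨isPrimDAP_one_cons_append_singleton_iff (v := []).2 ⟨?_, by simp, by simp⟩, rfl⟩
    exact ⟨by simp, List.isChain_pair.2 (Or.inl rfl)⟩

theorem ncard_primDapSet {m : ℕ} (hm : 3 ≤ m) : (primDapSet m).ncard = (dapSet (m - 1)).ncard := by
  rw [← Set.ncard_image_of_injective (dapSet (m - 1)) elevate_injective]
  congr 1
  ext q
  constructor
  · rintro ⟨hq, rfl⟩
    obtain ⟨p, hp, rfl⟩ := hq.exists_isDAP_elevate_eq hm
    exact ⟨p, ⟨hp, by simp [length_elevate]⟩, rfl⟩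
  · rintro ⟨p, ⟨hp, hlen⟩, rfl⟩
    exact ⟨hp.isPrimDAP_elevate, by rw [length_elevate]; omega⟩

theorem ncard_dap₀Set (k : ℕ) :
    (dap₀Set k).ncard = (dapSet k).ncard + if k = 0 then 1 else 0 := by
  split_ifs with hk
  · subst hk
    have h₀ : dap₀Set 0 = {[]} := by
      ext p
      simp only [dap₀Set, Set.mem_ofPred_eq, List.length_eq_zero_iff, Set.mem_singleton_iff,
        and_iff_right_iff_imp]
      rintro rfl
      exact ⟨⟨by simp, List.IsChain.nil⟩, by simp, by simp⟩
    have h : dapSet 0 = ∅ := by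
      ext p
      simp only [dapSet, Set.mem_ofPred_eq, List.length_eq_zero_iff, Set.mem_empty_iff_false,
        iff_false, not_and]
      exact fun hp => hp.1
    simp [h₀, h]
  · congr 1
    ext p
    exact ⟨fun ⟨hp, hlen⟩ => ⟨⟨by rintro rfl; exact hk hlen.symm, hp⟩, hlen⟩,
      fun ⟨hp, hlen⟩ => ⟨hp.isDAP₀, hlen⟩⟩

/-- for `n ≥ 3`,
`a_n = a_{n-2} + a_{n-1} + ∑_{k=2}^{n-1} a_k a_{n-1-k}`. -/
theorem stmt0 : ∀ n : ℕ, 3 ≤ n →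
    dapCount n = dapCount (n - 2) + dapCount (n - 1) +
      ∑ k ∈ Finset.Icc 2 (n - 1), dapCount k * dapCount (n - 1 - k) := by
  intro n hn
  have hfactor : ∀ m ∈ Finset.Icc 3 n, (primDapSet m).ncard * (dap₀Set (n - m)).ncard =
      dapCount (m - 1) * dapCount (n - m) + if m = n then dapCount (m - 1) else 0 := by
    intro m hm
    rw [Finset.mem_Icc] at hm
    simp only [ncard_primDapSet hm.1, ncard_dap₀Set, dapCount_eq_ncard, mul_add, mul_ite,
      mul_one, mul_zero, Nat.sub_eq_zero_iff_le, hm.2.ge_iff_eq]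
  have hshift : ∑ k ∈ Finset.Icc 2 (n - 1), dapCount k * dapCount (n - 1 - k) =
      ∑ m ∈ Finset.Icc 3 n, dapCount (m - 1) * dapCount (n - m) := by
    rw [← Nat.sub_add_cancel (by omega : 1 ≤ n), ← Finset.map_add_right_Icc 2 _ 1,
      Finset.sum_map]
    simp [Nat.sub_sub, add_comm 1]
  rw [dapCount_eq_ncard n, ncard_dapSet_eq_sum,
    ← Finset.insert_Icc_add_one_left_eq_Icc (by omega : 2 ≤ n), Finset.sum_insert (by simp),
    show 2 + 1 = 3 from rfl, primDapSet_two, Set.ncard_singleton, ncard_dap₀Set, if_neg (by omega),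
    Finset.sum_congr rfl hfactor, Finset.sum_add_distrib, Finset.sum_ite_eq',
    if_pos (Finset.mem_Icc.2 ⟨hn, le_rfl⟩), hshift, ← dapCount_eq_ncard]
  ring
end

section
/- For every n >= 3, the lowering map alpha = U beta U D_k -> beta U D_{k-1} is a bijection from the set of prime DAP of length n onto the set of all DAP of length n-1; in particular, the number of prime DAP of length n equals the number of DAP of length n-1. -/
open PowerSeries

/-- A prime DAP: a DAP ending with a down-step `D_k`, `k ≥ 2`, that returns to the
x-axis only at its final point. -/
def IsPrimeDAP (p : List ℤ) : Prop :=
  IsDAP p ∧ (∃ d, p.getLast? = some d ∧ d ≤ -2) ∧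
    ∀ i, 0 < i → i < p.length → 0 < (p.take i).sum

/-- The lowering map: `U β U D_k ↦ β U D_{k-1}` (drop the initial up-step and
increase the final down-step by one). -/
def lowerFun (p : List ℤ) : List ℤ := p.tail.dropLast ++ [p.getLastD 0 + 1]

noncomputable def primeCount (n : ℕ) : ℕ :=
  Nat.card {p : List ℤ // IsPrimeDAP p ∧ p.length = n}

theorem goodSteps_cons_one {p : List ℤ} : GoodSteps (1 :: p) ↔ GoodSteps p := by
  simp [goodSteps_iff, List.isChain_cons]

theorem goodSteps_append_up_down {l : List ℤ} {d : ℤ} (hd : d ≤ -1) :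
    GoodSteps (l ++ [1, d]) ↔ GoodSteps l := by
  simp only [goodSteps_iff, List.isChain_append, List.mem_append]
  grind [List.isChain_pair]

theorem List.exists_eq_append_pair {α : Type*} {p : List α} (hlen : 2 ≤ p.length) :
    ∃ l a b, p = l ++ [a, b] := by
  rcases p.eq_nil_or_concat with rfl | ⟨p', b, rfl⟩
  · simp at hlen
  rcases p'.eq_nil_or_concat with rfl | ⟨l, a, rfl⟩
  · simp at hlen
  exact ⟨l, a, b, by simp⟩

theorem GoodSteps.eq_append_up_down {p : List ℤ} {d : ℤ} (hp : GoodSteps p)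
    (hlen : 2 ≤ p.length) (hlast : p.getLast? = some d) (hd : d ≠ 1) :
    ∃ l, p = l ++ [1, d] := by
  obtain ⟨l, a, e, rfl⟩ := List.exists_eq_append_pair hlen
  obtain rfl : e = d := by simpa [← List.append_cons] using hlast
  have hae : a = 1 ∨ e = 1 := by
    have := (goodSteps_iff.mp hp).2
    simp_all [List.isChain_append]
  exact ⟨l, by grind⟩

theorem IsDAP.exists_eq_append_up_down {q : List ℤ} (hq : IsDAP q) (hlen : 2 ≤ q.length) :
    ∃ l e, q = l ++ [1, e] ∧ e ≤ -1 := by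
  obtain ⟨hne, hsteps, hsum, hnonneg⟩ := hq
  obtain ⟨q', e, rfl⟩ := (List.eq_nil_or_concat q).resolve_left hne
  rw [List.concat_eq_append] at *
  -- the height just before the last step is `-e`
  have he : e ≤ -1 := by
    have h := hnonneg q'.length
    rw [List.take_left] at h
    rw [List.sum_append, List.sum_singleton] at hsum
    rcases hsteps.1 e (by simp) with rfl | h' <;> omega
  obtain ⟨l, hl⟩ := hsteps.eq_append_up_down (d := e) hlen (by simp) (by omega)
  exact ⟨l, e, hl, he⟩

theorem IsPrimeDAP.exists_eq_cons_append {p : List ℤ} (hp : IsPrimeDAP p) (hlen : 3 ≤ p.length) :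
    ∃ l d, p = 1 :: (l ++ [1, d]) ∧ d ≤ -2 := by
  obtain ⟨⟨-, hsteps, -⟩, ⟨d, hlast, hd⟩, hpos⟩ := hp
  obtain ⟨l', rfl⟩ := hsteps.eq_append_up_down (by omega) hlast (by omega)
  obtain ⟨a, l, rfl⟩ : ∃ a l, l' = a :: l := by
    cases l' with
    | nil => simp at hlen
    | cons a l => exact ⟨a, l, rfl⟩
  have ha : a = 1 := by
    have h := hpos 1 one_pos (by simp)
    simp only [List.cons_append, List.take_succ_cons, List.take_zero, List.sum_cons, List.sum_nil] at h
    rcases hsteps.1 a (by simp) with h' | h' <;> omega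
  exact ⟨l, d, by simp [ha], hd⟩

theorem List.take_append_pair_eq {α : Type*} (l : List α) (x y y' : α) {i : ℕ}
    (hi : i ≤ l.length + 1) : (l ++ [x, y]).take i = (l ++ [x, y']).take i := by
  have hi' : i ≤ (l ++ [x]).length := by simpa
  rw [show l ++ [x, y] = l ++ [x] ++ [y] by simp, show l ++ [x, y'] = l ++ [x] ++ [y'] by simp,
    List.take_append_of_le_length hi', List.take_append_of_le_length hi']

theorem sum_take_succ_cons_append {l : List ℤ} {d : ℤ} {i : ℕ} (hi : i ≤ l.length + 1) :
    ((1 :: (l ++ [1, d])).take (i + 1)).sum = 1 + ((l ++ [1, d + 1]).take i).sum := by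
  rw [List.take_succ_cons, List.sum_cons, List.take_append_pair_eq l 1 d (d + 1) hi]

theorem isPrimeDAP_cons_append_iff {l : List ℤ} {d : ℤ} (hd : d ≤ -2) :
    IsPrimeDAP (1 :: (l ++ [1, d])) ↔ IsDAP (l ++ [1, d + 1]) := by
  have hsteps : GoodSteps (1 :: (l ++ [1, d])) ↔ GoodSteps (l ++ [1, d + 1]) := by
    rw [goodSteps_cons_one, goodSteps_append_up_down (by omega),
      goodSteps_append_up_down (by omega)]
  have hsum : (1 :: (l ++ [1, d])).sum = (l ++ [1, d + 1]).sum := by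
    simp only [List.sum_cons, List.sum_append, List.sum_nil]
    ring
  have hlast : (1 :: (l ++ [1, d])).getLast? = some d := by
    rw [← List.cons_append, List.getLast?_append]
    simp
  have hlen : (1 :: (l ++ [1, d])).length = l.length + 3 := by simp
  simp only [IsPrimeDAP, IsDAP, hsteps, hsum, hlast, hlen]
  constructor
  · rintro ⟨⟨-, hs, h0, -⟩, -, hpos⟩
    refine ⟨by simp, hs, h0, fun i => ?_⟩
    by_cases hi : i ≤ l.length + 1
    · have h := hpos (i + 1) (by omega) (by omega)
      rw [sum_take_succ_cons_append hi] at h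
      omega
    · rw [List.take_of_length_le (by simp; omega)]
      omega
  · rintro ⟨-, hs, h0, hnonneg⟩
    have hpos : ∀ i, 0 < i → i < l.length + 3 → 0 < ((1 :: (l ++ [1, d])).take i).sum := by
      rintro (_ | i) hi hi'
      · omega
      · rw [sum_take_succ_cons_append (by omega)]
        have := hnonneg i
        omega
    refine ⟨⟨by simp, hs, h0, fun i => ?_⟩, ⟨d, rfl, hd⟩, hpos⟩
    by_cases hi : i < l.length + 3
    · rcases Nat.eq_zero_or_pos i with rfl | hi0
      · simp
      · exact (hpos i hi0 hi).le
    · rw [List.take_of_length_le (by simp; omega), hsum]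
      omega

theorem lowerFun_cons_append (l : List ℤ) (d : ℤ) :
    lowerFun (1 :: (l ++ [1, d])) = l ++ [1, d + 1] := by
  rw [lowerFun, List.tail_cons, show (1 :: (l ++ [1, d])) = 1 :: l ++ [1] ++ [d] by simp,
    List.getLastD_concat, show l ++ [1, d] = l ++ [1] ++ [d] by simp, List.dropLast_concat]
  simp

theorem bijOn_lowerFun {n : ℕ} (hn : 3 ≤ n) :
    Set.BijOn lowerFun {p : List ℤ | IsPrimeDAP p ∧ p.length = n}
      {q : List ℤ | IsDAP q ∧ q.length = n - 1} := by
  refine ⟨?mapsTo, ?injOn, ?surjOn⟩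
  case mapsTo =>
    rintro p ⟨hp, rfl⟩
    obtain ⟨l, d, rfl, hd⟩ := hp.exists_eq_cons_append hn
    rw [lowerFun_cons_append]
    exact ⟨(isPrimeDAP_cons_append_iff hd).mp hp, by simp⟩
  case injOn =>
    rintro p₁ ⟨hp₁, rfl⟩ p₂ ⟨hp₂, hlen⟩ heq
    obtain ⟨l₁, d₁, rfl, -⟩ := hp₁.exists_eq_cons_append hn
    obtain ⟨l₂, d₂, rfl, -⟩ := hp₂.exists_eq_cons_append (hlen ▸ hn)
    rw [lowerFun_cons_append, lowerFun_cons_append] at heq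
    obtain ⟨rfl, h⟩ := List.append_inj' heq rfl
    simp_all
  case surjOn =>
    rintro q ⟨hq, hlen⟩
    obtain ⟨l, e, rfl, he⟩ := hq.exists_eq_append_up_down (by omega)
    refine ⟨1 :: (l ++ [1, e - 1]), ⟨?_, ?_⟩, ?_⟩
    · exact (isPrimeDAP_cons_append_iff (by omega)).mpr (by simpa using hq)
    · simp at hlen ⊢
      omega
    · simp [lowerFun_cons_append]

/-- for every `n ≥ 3`, the lowering map is a bijection from prime DAP of
length `n` onto DAP of length `n-1`; in particular the cardinalities agree. -/
theorem stmt1 : ∀ n : ℕ, 3 ≤ n →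
    Set.BijOn lowerFun {p : List ℤ | IsPrimeDAP p ∧ p.length = n}
      {q : List ℤ | IsDAP q ∧ q.length = n - 1} ∧
    primeCount n = dapCount (n - 1) := by
  intro n hn
  exact ⟨bijOn_lowerFun hn, Nat.card_congr (bijOn_lowerFun hn).equiv⟩
end

section
/- Every DAP alpha admits exactly one of the following decompositions: alpha = UD; alpha = beta UD with beta a DAP; alpha is prime; or alpha = beta gamma with beta a DAP and gamma a prime DAP. -/
open PowerSeries

/-- Decomposition (i): `α = UD`. -/
def DecA (p : List ℤ) : Prop := p = [1, -1]
/-- Decomposition (ii): `α = β UD` with `β` a DAP. -/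
def DecB (p : List ℤ) : Prop := ∃ β, IsDAP β ∧ p = β ++ [1, -1]
/-- Decomposition (iii): `α` is prime. -/
def DecC (p : List ℤ) : Prop := IsPrimeDAP p
/-- Decomposition (iv): `α = β γ` with `β` a DAP and `γ` prime. -/
def DecD (p : List ℤ) : Prop := ∃ β γ, IsDAP β ∧ IsPrimeDAP γ ∧ p = β ++ γ

/-! The decomposition is governed by the last return of `α` to the x-axis before its end. If there
is none, `α` is `UD` or prime according as its last step is `D₁` or `D_k` with `k ≥ 2`: a final
`D₁` must follow a `U`, so the path before that `UD` would end on the axis. If there is one, `α`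
splits there into a DAP `β` followed by a DAP `γ` without interior returns, and the same dichotomy
applies to `γ`. The four cases are told apart by whether `α` returns to the axis strictly inside
and whether it ends with `D₁`. -/

def ReturnsInside (p : List ℤ) : Prop :=
  ∃ j, 0 < j ∧ j < p.length ∧ (p.take j).sum = 0

theorem GoodSteps.take {p : List ℤ} (h : GoodSteps p) (n : ℕ) : GoodSteps (p.take n) :=
  ⟨fun s hs => h.1 s (List.mem_of_mem_take hs), h.2.take n⟩

theorem GoodSteps.drop {p : List ℤ} (h : GoodSteps p) (n : ℕ) : GoodSteps (p.drop n) :=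
  ⟨fun s hs => h.1 s (List.mem_of_mem_drop hs), h.2.drop n⟩

theorem sum_take_drop (p : List ℤ) (i j : ℕ) :
    ((p.drop i).take j).sum = (p.take (i + j)).sum - (p.take i).sum := by
  rw [List.take_add, List.sum_append]
  ring

namespace IsDAP

variable {p : List ℤ}

theorem take_of_sum_eq_zero (hp : IsDAP p) {i : ℕ} (hi : 0 < i)
    (h : (p.take i).sum = 0) : IsDAP (p.take i) := by
  refine ⟨?_, hp.2.1.take i, h, fun j => ?_⟩
  · simpa [List.take_eq_nil_iff, hi.ne'] using hp.1
  · rw [List.take_take]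
    exact hp.2.2.2 _

theorem drop_of_sum_eq_zero (hp : IsDAP p) {i : ℕ} (hi : i < p.length)
    (h : (p.take i).sum = 0) : IsDAP (p.drop i) := by
  refine ⟨by simpa using hi, hp.2.1.drop i, ?_, fun j => ?_⟩
  · have := hp.2.2.1
    rw [← List.take_append_drop i p, List.sum_append, h] at this
    simpa using this
  · rw [sum_take_drop, h, sub_zero]
    exact hp.2.2.2 _

theorem returnsInside_append {β : List ℤ} (hβ : IsDAP β) {γ : List ℤ} (hγ : γ ≠ []) :
    ReturnsInside (β ++ γ) :=
  ⟨β.length, List.length_pos_iff.mpr hβ.1, by simpa using List.length_pos_iff.mpr hγ,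
    by rw [List.take_left, hβ.2.2.1]⟩

theorem eq_UD_or_isPrimeDAP (hp : IsDAP p) (hr : ¬ReturnsInside p) :
    p = [1, -1] ∨ IsPrimeDAP p := by
  have hpos : ∀ i, 0 < i → i < p.length → 0 < (p.take i).sum := fun i hi hi' =>
    (hp.2.2.2 i).lt_of_ne fun h => hr ⟨i, hi, hi', h.symm⟩
  obtain ⟨-, ⟨hstep, hchain⟩, hsum, hnonneg⟩ := id hp
  obtain ⟨q, a, d, rfl⟩ : ∃ q a d, p = q ++ [a, d] := by
    rcases hrev : p.reverse with _ | ⟨d, _ | ⟨a, r⟩⟩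
    · exact absurd (List.reverse_eq_nil_iff.mp hrev) hp.1
    · obtain rfl : p = [d] := by simpa using congrArg List.reverse hrev
      have := hstep d (by simp)
      simp only [List.sum_cons, List.sum_nil, add_zero] at hsum
      omega
    · exact ⟨r.reverse, a, d, by simpa using congrArg List.reverse hrev⟩
  have hsum' : q.sum + a + d = 0 := by simpa [add_assoc] using hsum
  have hqa : 0 ≤ q.sum + a := by simpa using hnonneg (q.length + 1)
  have hd : d ≤ -1 := by
    rcases hstep d (by simp) with h | h <;> omega
  rcases lt_or_ge (-2) d with hd1 | hd2
  · have ha : a = 1 := by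
      have := List.isChain_pair.mp hchain.right_of_append
      omega
    have hq : q = [] := by
      by_contra hq
      exact hr ⟨q.length, List.length_pos_iff.mpr hq, by simp, by rw [List.take_left]; omega⟩
    obtain rfl : d = -1 := by omega
    exact Or.inl (by rw [hq, ha]; rfl)
  · exact Or.inr ⟨hp, ⟨d, by simp, hd2⟩, hpos⟩

theorem exists_append_of_returnsInside (hp : IsDAP p) (hr : ReturnsInside p) :
    ∃ β γ, IsDAP β ∧ IsDAP γ ∧ ¬ReturnsInside γ ∧ p = β ++ γ := by
  classical
  let P (j : ℕ) : Prop := 0 < j ∧ (p.take j).sum = 0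
  let i := Nat.findGreatest P (p.length - 1)
  obtain ⟨j, hj, hj', hjsum⟩ := hr
  obtain ⟨hi, hisum⟩ : 0 < i ∧ (p.take i).sum = 0 :=
    Nat.findGreatest_spec (P := P) (m := j) (by omega) ⟨hj, hjsum⟩
  have hlt : i < p.length := (Nat.findGreatest_le _).trans_lt (by omega)
  refine ⟨p.take i, p.drop i, hp.take_of_sum_eq_zero hi hisum,
    hp.drop_of_sum_eq_zero hlt hisum, ?_, (List.take_append_drop i p).symm⟩
  rintro ⟨k, hk, hk', hksum⟩
  rw [sum_take_drop, hisum, sub_zero] at hksum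
  simp only [List.length_drop] at hk'
  exact Nat.findGreatest_is_greatest (P := P) (n := p.length - 1) (k := i + k) (by omega)
    (by omega) ⟨by omega, hksum⟩

theorem decA_or_decB_or_decC_or_decD (hp : IsDAP p) : DecA p ∨ DecB p ∨ DecC p ∨ DecD p := by
  by_cases hr : ReturnsInside p
  · obtain ⟨β, γ, hβ, hγ, hγr, rfl⟩ := hp.exists_append_of_returnsInside hr
    rcases hγ.eq_UD_or_isPrimeDAP hγr with rfl | hγ'
    · exact Or.inr (Or.inl ⟨β, hβ, rfl⟩)
    · exact Or.inr (Or.inr (Or.inr ⟨β, γ, hβ, hγ', rfl⟩))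
  · rcases hp.eq_UD_or_isPrimeDAP hr with h | h
    · exact Or.inl h
    · exact Or.inr (Or.inr (Or.inl h))

end IsDAP

section Signatures

variable {p : List ℤ}

theorem IsPrimeDAP.not_returnsInside (h : IsPrimeDAP p) : ¬ReturnsInside p :=
  fun ⟨j, hj, hj', hjsum⟩ => (h.2.2 j hj hj').ne' hjsum

theorem IsPrimeDAP.getLast?_ne (h : IsPrimeDAP p) : p.getLast? ≠ some (-1) := by
  obtain ⟨d, hd, hd2⟩ := h.2.1
  rw [hd, ne_eq, Option.some.injEq]
  omega

theorem DecA.not_returnsInside_and_getLast? (h : DecA p) :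
    ¬ReturnsInside p ∧ p.getLast? = some (-1) := by
  subst h
  refine ⟨fun ⟨j, hj, hj', hjsum⟩ => ?_, rfl⟩
  obtain rfl : j = 1 := by simp only [List.length_cons, List.length_nil] at hj'; omega
  simp at hjsum

theorem DecB.returnsInside_and_getLast? (h : DecB p) :
    ReturnsInside p ∧ p.getLast? = some (-1) := by
  obtain ⟨β, hβ, rfl⟩ := h
  exact ⟨hβ.returnsInside_append (by simp), by simp⟩

theorem DecC.not_returnsInside_and_getLast?_ne (h : DecC p) :
    ¬ReturnsInside p ∧ p.getLast? ≠ some (-1) :=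
  ⟨IsPrimeDAP.not_returnsInside h, IsPrimeDAP.getLast?_ne h⟩

theorem DecD.returnsInside_and_getLast?_ne (h : DecD p) :
    ReturnsInside p ∧ p.getLast? ≠ some (-1) := by
  obtain ⟨β, γ, hβ, hγ, rfl⟩ := h
  refine ⟨hβ.returnsInside_append hγ.1.1, ?_⟩
  rw [List.getLast?_append_of_ne_nil _ hγ.1.1]
  exact hγ.getLast?_ne

end Signatures

/-- every DAP admits exactly one of the four decompositions. -/
theorem stmt2 : ∀ p : List ℤ, IsDAP p →
    (DecA p ∨ DecB p ∨ DecC p ∨ DecD p) ∧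
    ¬(DecA p ∧ DecB p) ∧ ¬(DecA p ∧ DecC p) ∧ ¬(DecA p ∧ DecD p) ∧
    ¬(DecB p ∧ DecC p) ∧ ¬(DecB p ∧ DecD p) ∧ ¬(DecC p ∧ DecD p) := by
  intro p hp
  have hA := @DecA.not_returnsInside_and_getLast? p
  have hB := @DecB.returnsInside_and_getLast? p
  have hC := @DecC.not_returnsInside_and_getLast?_ne p
  have hD := @DecD.returnsInside_and_getLast?_ne p
  exact ⟨hp.decA_or_decB_or_decC_or_decD, by tauto⟩
end

section
/- The ordinary generating function counting partial GDAP that never go below the line y = m (m <= 0 fixed) by length is (r^{-m} - r^{-1-m} - x^2)/x^3, where r = (1 + x - x^2 - sqrt(x^4 - 2x^3 - x^2 - 2x + 1))/(2x). In particular for m = -1 the series begins 1 + 2x + 4x^2 + 8x^3 + 17x^4 + 37x^5 + ... -/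
open PowerSeries

/-- The path never goes strictly below the line `y = m`. -/
def BoundedBelow (m : ℤ) (p : List ℤ) : Prop := ∀ i, m ≤ (p.take i).sum

/-- Number of partial GDAP of length `n` that never go below `y = m`. -/
noncomputable def partialCount (m : ℤ) (n : ℕ) : ℕ :=
  Nat.card {p : List ℤ // GoodSteps p ∧ BoundedBelow m p ∧ p.length = n}

noncomputable def partialSeries (m : ℤ) : PowerSeries ℚ :=
  PowerSeries.mk fun n => (partialCount m n : ℚ)

/-! Splitting off the first step gives a linear system for the generating functions `F h` of
paths that stay at most `h` below their start: a path is empty, or starts with an up-step, or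
with a down-step to some height `j < h`, which must be followed by an up-step, so
`F h = 1 + h X + X (F (h + 1) + X ∑_{j < h} F (j + 1))`. Comparing coefficients, this system has
only one solution. Multiplied by `X³ r`, it is solved by `r ^ (h + 1) - r ^ h - X² r`: the sum
telescopes, and what remains is `-r ^ h` times the kernel equation `X r² - (1 + X - X²) r + 1 = 0`.
-/

namespace GDAP

/-- Coefficients of `r`, read off from `r = 1 + X (r² - r + X r)`. -/
def kernelRootCoeff : ℕ → ℚ
  | 0 => 1
  | 1 => 0
  | n + 2 => ∑ i : Fin (n + 2), kernelRootCoeff i * kernelRootCoeff (n + 1 - i)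
      - kernelRootCoeff (n + 1) + kernelRootCoeff n

def kernelRoot : ℚ⟦X⟧ := mk kernelRootCoeff

lemma constantCoeff_kernelRoot : constantCoeff kernelRoot = 1 := by
  simp [kernelRoot, kernelRootCoeff]

lemma coeff_kernelRoot_sq (n : ℕ) :
    coeff n (kernelRoot ^ 2) = ∑ i : Fin (n + 1), kernelRootCoeff i * kernelRootCoeff (n - i) := by
  rw [sq, coeff_mul, Finset.Nat.sum_antidiagonal_eq_sum_range_succ
    (fun i j => coeff i kernelRoot * coeff j kernelRoot), Fin.sum_univ_eq_sum_range
    (fun i => kernelRootCoeff i * kernelRootCoeff (n - i))]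
  simp [kernelRoot]

lemma kernelRoot_quadratic :
    X * kernelRoot ^ 2 - (1 + X - X ^ 2) * kernelRoot + 1 = 0 := by
  ext n
  rcases n with _ | _ | n
  · simp [kernelRoot, kernelRootCoeff]
  · simp [kernelRoot, kernelRootCoeff, coeff_one, sub_mul, add_mul, coeff_succ_X_mul,
      coeff_X_pow_mul']
  · simp only [map_add, map_sub, sub_mul, add_mul, one_mul, coeff_succ_X_mul, coeff_kernelRoot_sq]
    simp [coeff_one, coeff_X_pow_mul', kernelRoot, kernelRootCoeff]
    ring

lemma goodSteps_iff (p : List ℤ) :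
    GoodSteps p ↔ (∀ s ∈ p, s = 1 ∨ s ≤ -1) ∧ List.IsChain (fun a b => a = 1 ∨ b = 1) p :=
  Iff.rfl

lemma goodSteps_nil : GoodSteps [] := ⟨by simp, List.isChain_nil⟩

lemma goodSteps_cons (s : ℤ) (q : List ℤ) :
    GoodSteps (s :: q) ↔ (s = 1 ∨ s ≤ -1) ∧ (∀ a ∈ q.head?, s = 1 ∨ a = 1) ∧ GoodSteps q := by
  simp only [goodSteps_iff, List.mem_cons, forall_eq_or_imp, List.isChain_cons]
  tauto

lemma BoundedBelow.nonpos {m : ℤ} {p : List ℤ} (hp : BoundedBelow m p) : m ≤ 0 := by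
  simpa using hp 0

lemma boundedBelow_nil {m : ℤ} : BoundedBelow m [] ↔ m ≤ 0 :=
  ⟨BoundedBelow.nonpos, fun hm i => by simpa using hm⟩

lemma boundedBelow_cons (m s : ℤ) (q : List ℤ) :
    BoundedBelow m (s :: q) ↔ m ≤ 0 ∧ BoundedBelow (m - s) q := by
  refine ⟨fun hp => ⟨BoundedBelow.nonpos hp, fun i => ?_⟩, fun ⟨hm, hq⟩ i => ?_⟩
  · have := hp (i + 1)
    simp only [List.take_succ_cons, List.sum_cons] at this
    omega
  · rcases i with _ | i
    · simpa using hm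
    · have := hq i
      simp only [List.take_succ_cons, List.sum_cons]
      omega

/-- `h` is the height above the floor, and `b` records that the previous step went down; a
down-step is indexed by the height `j < h` it reaches. -/
def paths : Bool → ℕ → ℕ → Finset (List ℤ)
  | _, _, 0 => {[]}
  | false, h, n + 1 => (paths false (h + 1) n).image (List.cons 1) ∪
      (Finset.range h).biUnion fun j => (paths true j n).image (List.cons ((j : ℤ) - h))
  | true, h, n + 1 => (paths false (h + 1) n).image (List.cons 1)

lemma cons_mem_image_cons {α : Type*} [DecidableEq α] {s a : α} {q : List α}
    {S : Finset (List α)} :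
    a :: q ∈ S.image (List.cons s) ↔ a = s ∧ q ∈ S := by
  simp [eq_comm, and_comm]

lemma mem_paths (b : Bool) (h n : ℕ) (p : List ℤ) :
    p ∈ paths b h n ↔
      GoodSteps p ∧ BoundedBelow (-h) p ∧ p.length = n ∧ (b = true → ∀ a ∈ p.head?, a = 1) := by
  induction n generalizing b h p with
  | zero =>
    rcases p with _ | ⟨s, q⟩ <;> cases b <;> simp [paths, goodSteps_nil, boundedBelow_nil]
  | succ n ih =>
    rcases p with _ | ⟨s, q⟩
    · cases b <;> simp [paths]
    have hup : -(h : ℤ) - 1 = -((h + 1 : ℕ) : ℤ) := by push_cast; ring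
    have hdown (j : ℕ) : -(h : ℤ) - (j - h) = -j := by ring
    cases b
    · simp only [paths, Finset.mem_union, cons_mem_image_cons, Finset.mem_biUnion,
        Finset.mem_range, ih, goodSteps_cons, boundedBelow_cons, List.length_cons,
        Nat.add_right_cancel_iff, Bool.false_eq_true, false_implies, and_true, true_implies]
      constructor
      · rintro (⟨rfl, hq, hb, hl⟩ | ⟨j, hj, rfl, hq, hb, hl, hhead⟩)
        · exact ⟨⟨Or.inl rfl, fun _ _ => Or.inl rfl, hq⟩, ⟨by omega, hup ▸ hb⟩, hl⟩
        · exact ⟨⟨Or.inr (by omega), fun a ha => Or.inr (hhead a ha), hq⟩,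
            ⟨by omega, (hdown j).symm ▸ hb⟩, hl⟩
      · rintro ⟨⟨hs | hs, hhead, hq⟩, ⟨-, hb⟩, hl⟩
        · subst hs
          exact Or.inl ⟨rfl, hq, hup ▸ hb, hl⟩
        · have := BoundedBelow.nonpos hb
          obtain ⟨j, rfl⟩ : ∃ j : ℕ, s = j - h := ⟨(s + h).toNat, by omega⟩
          exact Or.inr ⟨j, by omega, rfl, hq, hdown j ▸ hb, hl,
            fun a ha => (hhead a ha).resolve_left (by omega)⟩
    · simp only [paths, cons_mem_image_cons, ih, goodSteps_cons, boundedBelow_cons,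
        List.length_cons, Nat.add_right_cancel_iff, Bool.false_eq_true, false_implies, and_true,
        true_implies, List.head?_cons, Option.mem_some_iff, forall_eq']
      constructor
      · rintro ⟨rfl, hq, hb, hl⟩
        exact ⟨⟨Or.inl rfl, fun _ _ => Or.inl rfl, hq⟩, ⟨by omega, hup ▸ hb⟩, hl, rfl⟩
      · rintro ⟨⟨-, -, hq⟩, ⟨-, hb⟩, hl, rfl⟩
        exact ⟨rfl, hq, hup ▸ hb, hl⟩

lemma partialCount_eq_card_paths {m : ℤ} (hm : m ≤ 0) (n : ℕ) :
    partialCount m n = (paths false m.natAbs n).card := by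
  obtain ⟨h, rfl⟩ : ∃ h : ℕ, m = -h := ⟨m.natAbs, by omega⟩
  rw [partialCount, ← Nat.card_eq_finsetCard]
  exact Nat.card_congr <| Equiv.subtypeEquivRight fun p => by simp [mem_paths]

lemma disjoint_image_cons {α : Type*} [DecidableEq α] {s t : α} (hst : s ≠ t)
    (S T : Finset (List α)) :
    Disjoint (S.image (List.cons s)) (T.image (List.cons t)) := by
  refine Finset.disjoint_left.2 fun p hs ht => ?_
  obtain ⟨q, -, rfl⟩ := Finset.mem_image.1 hs
  exact hst (cons_mem_image_cons.1 ht).1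

lemma card_paths_true_succ (h n : ℕ) :
    (paths true h (n + 1)).card = (paths false (h + 1) n).card :=
  Finset.card_image_of_injective _ List.cons_injective

lemma card_paths_false_succ (h n : ℕ) :
    (paths false h (n + 1)).card =
      (paths false (h + 1) n).card + ∑ j ∈ Finset.range h, (paths true j n).card := by
  rw [paths, Finset.card_union_of_disjoint, Finset.card_image_of_injective _ List.cons_injective,
    Finset.card_biUnion]
  · simp only [Finset.card_image_of_injective _ List.cons_injective]
  · intro j _ k _ hjk
    exact disjoint_image_cons (by simpa using hjk) _ _
  · exact (Finset.disjoint_biUnion_right _ _ _).2 fun j hj =>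
      disjoint_image_cons (by have := Finset.mem_range.1 hj; omega) _ _

def HeightRecurrence {R : Type*} [CommRing R] (c F : ℕ → R⟦X⟧) : Prop :=
  ∀ h, F h = c h + X * (F (h + 1) + X * ∑ j ∈ Finset.range h, F (j + 1))

section HeightRecurrence

variable {R : Type*} [CommRing R] {c F G : ℕ → R⟦X⟧}

lemma HeightRecurrence.mul_right (hF : HeightRecurrence c F) (u : R⟦X⟧) :
    HeightRecurrence (fun h => c h * u) (fun h => F h * u) := fun h => by
  dsimp only
  rw [hF h, ← Finset.sum_mul]
  ring

lemma HeightRecurrence.unique (hF : HeightRecurrence c F) (hG : HeightRecurrence c G) :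
    F = G := by
  have hdvd (n : ℕ) : ∀ h, X ^ n ∣ F h - G h := by
    induction n with
    | zero => simp
    | succ n ih =>
      intro h
      have hdiff : F h - G h = X * ((F (h + 1) - G (h + 1)) +
          X * ∑ j ∈ Finset.range h, (F (j + 1) - G (j + 1))) := by
        rw [hF h, hG h, Finset.sum_sub_distrib]
        ring
      rw [hdiff, pow_succ']
      exact mul_dvd_mul_left X (dvd_add (ih _)
        (dvd_mul_of_dvd_right (Finset.dvd_sum fun j _ => ih _) _))
  funext h
  rw [← sub_eq_zero]
  ext n
  simpa using X_pow_dvd_iff.1 (hdvd (n + 1) h) n (Nat.lt_succ_self n)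

end HeightRecurrence

def pathSeries (b : Bool) (h : ℕ) : ℚ⟦X⟧ := mk fun n => ((paths b h n).card : ℚ)

lemma pathSeries_true (h : ℕ) : pathSeries true h = 1 + X * pathSeries false (h + 1) := by
  ext (_ | n)
  · simp [pathSeries, paths]
  · simp [pathSeries, coeff_succ_X_mul, coeff_one, card_paths_true_succ]

lemma pathSeries_false (h : ℕ) :
    pathSeries false h =
      1 + X * (pathSeries false (h + 1) + ∑ j ∈ Finset.range h, pathSeries true j) := by
  ext (_ | n)
  · simp [pathSeries, paths]
  · simp [pathSeries, coeff_succ_X_mul, coeff_one, card_paths_false_succ, map_sum]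

lemma heightRecurrence_pathSeries :
    HeightRecurrence (fun h => 1 + (h : ℚ⟦X⟧) * X) (pathSeries false) := fun h => by
  simp only [pathSeries_false h, pathSeries_true, Finset.sum_add_distrib, Finset.sum_const,
    Finset.card_range, nsmul_eq_mul, mul_one, ← Finset.mul_sum]
  ring

noncomputable def closedForm (h : ℕ) : ℚ⟦X⟧ :=
  kernelRoot ^ (h + 1) - kernelRoot ^ h - X ^ 2 * kernelRoot

lemma sum_closedForm (h : ℕ) :
    ∑ j ∈ Finset.range h, closedForm (j + 1) =
      kernelRoot ^ (h + 1) - kernelRoot - (h : ℚ⟦X⟧) * (X ^ 2 * kernelRoot) := by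
  simp only [closedForm, Finset.sum_sub_distrib,
    Finset.sum_range_sub (fun j => kernelRoot ^ (j + 1)), Finset.sum_const, Finset.card_range,
    nsmul_eq_mul]
  ring

lemma heightRecurrence_closedForm :
    HeightRecurrence (fun h => (1 + (h : ℚ⟦X⟧) * X) * (X ^ 3 * kernelRoot)) closedForm := by
  intro h
  rw [sum_closedForm]
  simp only [closedForm]
  linear_combination (-kernelRoot ^ h) * kernelRoot_quadratic

lemma pathSeries_mul_eq_closedForm (h : ℕ) :
    pathSeries false h * (X ^ 3 * kernelRoot) = closedForm h :=
  congrFun ((heightRecurrence_pathSeries.mul_right _).unique heightRecurrence_closedForm) h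

lemma partialSeries_eq_pathSeries {m : ℤ} (hm : m ≤ 0) :
    partialSeries m = pathSeries false m.natAbs := by
  ext n
  simp [partialSeries, pathSeries, partialCount_eq_card_paths hm]

end GDAP

/-- the o.g.f. of partial GDAP above `y = m` equals
`(r^{-m} - r^{-1-m} - x²)/x³`, where `r = (1+x-x²-√(x⁴-2x³-x²-2x+1))/(2x)` is the
power-series root of `x r² - (1+x-x²) r + 1 = 0` with `r(0) = 1`; stated after
multiplying through by `x³ r`.  For `m = -1` the series begins
`1 + 2x + 4x² + 8x³ + 17x⁴ + 37x⁵ + ⋯`. -/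
theorem stmt9 :
    (∀ m : ℤ, m ≤ 0 →
      ∃ r : PowerSeries ℚ, constantCoeff r = 1 ∧
        X * r ^ 2 - (1 + X - X ^ 2) * r + 1 = 0 ∧
        partialSeries m * X ^ 3 * r =
          r ^ (m.natAbs + 1) - r ^ m.natAbs - X ^ 2 * r) ∧
    partialCount (-1) 0 = 1 ∧ partialCount (-1) 1 = 2 ∧ partialCount (-1) 2 = 4 ∧
    partialCount (-1) 3 = 8 ∧ partialCount (-1) 4 = 17 ∧ partialCount (-1) 5 = 37 := by
  refine ⟨fun m hm => ⟨GDAP.kernelRoot, GDAP.constantCoeff_kernelRoot,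
    GDAP.kernelRoot_quadratic, ?_⟩, ?_⟩
  · rw [GDAP.partialSeries_eq_pathSeries hm, mul_assoc, GDAP.pathSeries_mul_eq_closedForm]
    rfl
  · simp only [GDAP.partialCount_eq_card_paths (by norm_num : (-1 : ℤ) ≤ 0)]
    decide
end

section
/- The sequence of determinants D_t = det(A_t) of the transfer matrices for GDAP bounded between y = 0 and y = t satisfies the linear recurrence D_{t+2} + (x^2 - x - 1) D_{t+1} + x D_t = 0 with D_0 = 1 and D_1 = 1 - x^2; consequently D_2 = x^4 - x^3 - 2x^2 + 1 and D_3 = -x^6 + 2x^5 + 2x^4 - 2x^3 - 3x^2 + 1. -/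
open PowerSeries

open Polynomial in
/-- The transfer matrix `A_t` of size `2(t+1)` over `ℚ[x]`, in block form `[[L, M],[N, -I]]`:
`L` lower bidiagonal with `-1` on the diagonal and `x` on the subdiagonal, `M` with `x`
on the subdiagonal, `N` strictly upper triangular with all entries `x`. -/
noncomputable def transferMat (t : ℕ) :
    Matrix (Fin (2 * (t + 1))) (Fin (2 * (t + 1))) (Polynomial ℚ) :=
  Matrix.of fun i j =>
    if i.val < t + 1 then
      if j.val < t + 1 then
        (if i.val = j.val then -1 else if i.val = j.val + 1 then X else 0)
      else
        (if i.val = (j.val - (t + 1)) + 1 then X else 0)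
    else
      if j.val < t + 1 then
        (if i.val - (t + 1) < j.val then X else 0)
      else
        (if i.val = j.val then -1 else 0)

noncomputable def Dt (t : ℕ) : Polynomial ℚ := (transferMat t).det

open Polynomial Matrix

lemma succAbove_one_cases {n : ℕ} (i : Fin (n+1)) :
    (((1 : Fin (n+2)).succAbove i : Fin (n+2)) : ℕ) = if (i:ℕ) = 0 then 0 else (i:ℕ)+1 := by
  have h1 : ((1 : Fin (n+2)) : ℕ) = 1 := rfl
  have h2 : ((i.castSucc : Fin (n+2)) : ℕ) = (i:ℕ) := rfl
  by_cases h : (i:ℕ) = 0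
  · rw [if_pos h, Fin.succAbove, if_pos (by rw [Fin.lt_iff_val_lt_val, h1, h2, h]; norm_num)]
    rw [h2, h]
  · rw [if_neg h, Fin.succAbove, if_neg (by rw [Fin.lt_iff_val_lt_val, h1, h2]; omega)]
    exact Fin.val_succ i

noncomputable def Cmat (n : ℕ) : Matrix (Fin n) (Fin n) (Polynomial ℚ) :=
  Matrix.of fun i j => if (i:ℕ) = j then Polynomial.X^2 - 1 else if (i:ℕ) = (j:ℕ)+1 then Polynomial.X
    else if (i:ℕ) < j then Polynomial.X^2 else 0

noncomputable def Fmat (n : ℕ) : Matrix (Fin n) (Fin n) (Polynomial ℚ) :=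
  Matrix.of fun i j => if (i:ℕ) = 0 then Polynomial.X^2 else if (i:ℕ) = j then Polynomial.X^2 - 1
    else if (i:ℕ) = (j:ℕ)+1 then Polynomial.X else if (i:ℕ) < j then Polynomial.X^2 else 0

lemma Cmat_sub0 (n : ℕ) :
    (Cmat (n+2)).submatrix ((0 : Fin (n+2)).succAbove) Fin.succ = Cmat (n+1) := by
  ext i j : 2
  simp only [Matrix.submatrix_apply, Fin.zero_succAbove, Cmat, Matrix.of_apply,
    Fin.val_succ, add_lt_add_iff_right, add_left_inj]

lemma Fmat_sub0 (n : ℕ) :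
    (Fmat (n+2)).submatrix ((0 : Fin (n+2)).succAbove) Fin.succ = Cmat (n+1) := by
  ext i j : 2
  simp only [Matrix.submatrix_apply, Fin.zero_succAbove, Fmat, Cmat, Matrix.of_apply,
    Fin.val_succ, add_lt_add_iff_right, add_left_inj, Nat.succ_ne_zero, if_false]

lemma Cmat_sub1 (n : ℕ) :
    (Cmat (n+2)).submatrix ((1 : Fin (n+2)).succAbove) Fin.succ = Fmat (n+1) := by
  ext i j : 2
  have hr := succAbove_one_cases i
  simp only [Matrix.submatrix_apply, Cmat, Fmat, Matrix.of_apply, Fin.val_succ, hr]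
  by_cases h : (i:ℕ) = 0
  · simp [h]
  · simp only [if_neg h, add_lt_add_iff_right, add_left_inj]

lemma Fmat_sub1 (n : ℕ) :
    (Fmat (n+2)).submatrix ((1 : Fin (n+2)).succAbove) Fin.succ = Fmat (n+1) := by
  ext i j : 2
  have hr := succAbove_one_cases i
  simp only [Matrix.submatrix_apply, Fmat, Matrix.of_apply, Fin.val_succ, hr]
  by_cases h : (i:ℕ) = 0
  · simp [h]
  · simp only [if_neg h, Nat.succ_ne_zero, if_false, add_lt_add_iff_right, add_left_inj]

lemma detC_rec (n : ℕ) :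
    (Cmat (n+2)).det = (Polynomial.X^2-1) * (Cmat (n+1)).det - Polynomial.X * (Fmat (n+1)).det := by
  rw [show (n+2) = (n+1).succ from rfl, Matrix.det_succ_column_zero,
    Fin.sum_univ_succ, Fin.sum_univ_succ]
  have h0 : Cmat (n+1).succ 0 0 = Polynomial.X^2-1 := by simp [Cmat]
  have h1 : Cmat (n+1).succ ((0:Fin (n+1)).succ) 0 = Polynomial.X := by
    simp [Cmat]
  have hz : ∀ i : Fin n, Cmat (n+1).succ ((i.succ).succ) 0 = 0 := by
    intro i; simp [Cmat]
  rw [Finset.sum_eq_zero (fun i _ => by rw [hz i]; ring)]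
  rw [h0, h1, Fin.succ_zero_eq_one,
    show ((Cmat ((n+1).succ)).submatrix (Fin.succAbove 0) Fin.succ).det = (Cmat (n+1)).det from
      congrArg Matrix.det (Cmat_sub0 n),
    show ((Cmat ((n+1).succ)).submatrix (Fin.succAbove 1) Fin.succ).det = (Fmat (n+1)).det from
      congrArg Matrix.det (Cmat_sub1 n)]
  simp; ring

lemma detF_rec (n : ℕ) :
    (Fmat (n+2)).det = Polynomial.X^2 * (Cmat (n+1)).det - Polynomial.X * (Fmat (n+1)).det := by
  rw [show (n+2) = (n+1).succ from rfl, Matrix.det_succ_column_zero,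
    Fin.sum_univ_succ, Fin.sum_univ_succ]
  have h0 : Fmat (n+1).succ 0 0 = Polynomial.X^2 := by simp [Fmat]
  have h1 : Fmat (n+1).succ ((0:Fin (n+1)).succ) 0 = Polynomial.X := by
    simp [Fmat]
  have hz : ∀ i : Fin n, Fmat (n+1).succ ((i.succ).succ) 0 = 0 := by
    intro i; simp [Fmat]
  rw [Finset.sum_eq_zero (fun i _ => by rw [hz i]; ring)]
  rw [h0, h1, Fin.succ_zero_eq_one,
    show ((Fmat ((n+1).succ)).submatrix (Fin.succAbove 0) Fin.succ).det = (Cmat (n+1)).det from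
      congrArg Matrix.det (Fmat_sub0 n),
    show ((Fmat ((n+1).succ)).submatrix (Fin.succAbove 1) Fin.succ).det = (Fmat (n+1)).det from
      congrArg Matrix.det (Fmat_sub1 n)]
  simp; ring

noncomputable def eg : ℕ → Polynomial ℚ × Polynomial ℚ
  | 0 => (1, 0)
  | n+1 => ((Polynomial.X^2-1) * (eg n).1 - Polynomial.X * (eg n).2, Polynomial.X^2 * (eg n).1 - Polynomial.X * (eg n).2)

lemma detCF : ∀ n : ℕ, (Cmat (n+1)).det = (eg (n+1)).1 ∧ (Fmat (n+1)).det = (eg (n+1)).2 := by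
  intro n
  induction n with
  | zero =>
    constructor
    · rw [Matrix.det_fin_one]; simp [Cmat, eg]
    · rw [Matrix.det_fin_one]; simp [Fmat, eg]
  | succ n ih =>
    constructor
    · show (Cmat (n+2)).det = (eg (n+2)).1
      rw [detC_rec n, ih.1, ih.2]; simp [eg]
    · show (Fmat (n+2)).det = (eg (n+2)).2
      rw [detF_rec n, ih.1, ih.2]; simp [eg]

lemma detC_eq : ∀ t : ℕ, (Cmat t).det = (eg t).1
  | 0 => by rw [Matrix.det_isEmpty]; simp [eg]
  | n+1 => (detCF n).1

lemma eg_rec (n : ℕ) :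
    (eg (n+2)).1 = (Polynomial.X^2-Polynomial.X-1) * (eg (n+1)).1 - Polynomial.X * (eg n).1 := by
  simp [eg]; ring

noncomputable def Lmat (n : ℕ) : Matrix (Fin n) (Fin n) (Polynomial ℚ) :=
  Matrix.of fun i j => if (i:ℕ) = j then -1 else if (i:ℕ) = (j:ℕ)+1 then Polynomial.X else 0

noncomputable def Mmat (n : ℕ) : Matrix (Fin n) (Fin n) (Polynomial ℚ) :=
  Matrix.of fun i j => if (i:ℕ) = (j:ℕ)+1 then Polynomial.X else 0

noncomputable def Nmat (n : ℕ) : Matrix (Fin n) (Fin n) (Polynomial ℚ) :=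
  Matrix.of fun i j => if (i:ℕ) < (j:ℕ) then Polynomial.X else 0

noncomputable def Bmat (n : ℕ) : Matrix (Fin n) (Fin n) (Polynomial ℚ) :=
  Matrix.of fun i j => if (i:ℕ) = 0 then (if (j:ℕ) = 0 then -1 else 0)
    else if (i:ℕ) = j then Polynomial.X^2-1 else if (i:ℕ) = (j:ℕ)+1 then Polynomial.X
    else if (i:ℕ) < j then Polynomial.X^2 else 0

noncomputable def blockEquiv (t : ℕ) : Fin (t+1) ⊕ Fin (t+1) ≃ Fin (2*(t+1)) :=
  finSumFinEquiv.trans (finCongr (two_mul (t+1)).symm)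

lemma transfer_eq (t : ℕ) :
    (transferMat t).submatrix (blockEquiv t) (blockEquiv t) =
      fromBlocks (Lmat (t+1)) (Mmat (t+1)) (Nmat (t+1)) (-1) := by
  have hl : ∀ i : Fin (t+1), ((blockEquiv t (Sum.inl i) : Fin (2*(t+1))) : ℕ) = (i:ℕ) := by
    intro i; simp [blockEquiv]
  have hr : ∀ i : Fin (t+1), ((blockEquiv t (Sum.inr i) : Fin (2*(t+1))) : ℕ) = t+1+(i:ℕ) := by
    intro i; simp [blockEquiv]; omega
  ext i j
  rcases i with i | i <;> rcases j with j | j <;>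
    simp only [Matrix.submatrix_apply, transferMat, Matrix.of_apply, hl, hr,
      Matrix.fromBlocks_apply₁₁, Matrix.fromBlocks_apply₁₂, Matrix.fromBlocks_apply₂₁,
      Matrix.fromBlocks_apply₂₂, Lmat, Mmat, Nmat, Matrix.neg_apply, Matrix.one_apply]
  · rw [if_pos i.isLt, if_pos j.isLt]
  · rw [if_pos i.isLt, if_neg (by omega), Nat.add_sub_cancel_left]
  · rw [if_neg (by omega), if_pos j.isLt, Nat.add_sub_cancel_left]
  · rw [if_neg (by omega), if_neg (by omega)]
    by_cases h : i = j
    · subst h; rw [if_pos rfl, if_pos rfl]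
    · rw [if_neg (by simpa [Fin.ext_iff] using fun hh => h (Fin.ext (by omega))),
        if_neg h]
      simp

lemma LMN (t : ℕ) : Lmat (t+1) + Mmat (t+1) * Nmat (t+1) = Bmat (t+1) := by
  refine Matrix.ext fun i j => ?_
  have hsum : (Mmat (t+1) * Nmat (t+1)) i j
      = if 1 ≤ (i:ℕ) ∧ (i:ℕ) ≤ (j:ℕ) then Polynomial.X^2 else 0 := by
    rw [Matrix.mul_apply]
    rcases Nat.eq_zero_or_pos (i:ℕ) with h | h
    · rw [Finset.sum_eq_zero, if_neg (by omega)]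
      intro k _
      simp [Mmat, Nmat, h]
    · have hk : ((i:ℕ) - 1) < t + 1 := by omega
      have hv : ((⟨(i:ℕ)-1, hk⟩ : Fin (t+1)) : ℕ) = (i:ℕ)-1 := rfl
      rw [Finset.sum_eq_single (⟨(i:ℕ)-1, hk⟩ : Fin (t+1))]
      · simp only [Mmat, Nmat, Matrix.of_apply]
        rw [if_pos (show (i:ℕ) = (i:ℕ)-1+1 by omega)]
        by_cases hij : (i:ℕ) ≤ (j:ℕ)
        · rw [if_pos (show (i:ℕ)-1 < (j:ℕ) by omega), if_pos (by omega)]; ring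
        · rw [if_neg (show ¬((i:ℕ)-1 < (j:ℕ)) by omega), if_neg (by omega)]; ring
      · intro k _ hne
        simp only [Mmat, Nmat, Matrix.of_apply]
        rw [if_neg]
        · ring
        · intro hh
          exact hne (Fin.ext (show (k:ℕ) = (i:ℕ)-1 by omega))
      · intro hmem; exact absurd (Finset.mem_univ _) hmem
  rw [Matrix.add_apply, hsum]
  simp only [Lmat, Bmat, Matrix.of_apply]
  split_ifs <;> first | ring1 | (exfalso; omega)

lemma Bmat_sub (t : ℕ) :
    (Bmat (t+1)).submatrix Fin.succ ((0 : Fin (t+1)).succAbove) = Cmat t := by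
  ext i j : 2
  simp only [Matrix.submatrix_apply, Fin.zero_succAbove, Bmat, Cmat, Matrix.of_apply,
    Fin.val_succ, Nat.succ_ne_zero, if_false, add_lt_add_iff_right, add_left_inj]

lemma detB (t : ℕ) : (Bmat (t+1)).det = -(Cmat t).det := by
  rw [show (t+1) = t.succ from rfl, Matrix.det_succ_row_zero, Fin.sum_univ_succ]
  have h0 : Bmat t.succ 0 0 = -1 := by simp [Bmat]
  have hz : ∀ j : Fin t, Bmat t.succ 0 (j.succ) = 0 := by
    intro j; simp [Bmat]
  rw [Finset.sum_eq_zero (fun j _ => by rw [hz j]; ring), h0,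
    show ((Bmat t.succ).submatrix Fin.succ (Fin.succAbove 0)).det = (Cmat t).det from
      congrArg Matrix.det (Bmat_sub t)]
  simp

lemma Dt_eq (t : ℕ) : Dt t = (-1)^t * (eg t).1 := by
  letI : Invertible (-1 : Matrix (Fin (t+1)) (Fin (t+1)) (Polynomial ℚ)) :=
    ⟨-1, by rw [neg_mul_neg, one_mul], by rw [neg_mul_neg, one_mul]⟩
  have hinv : (⅟(-1 : Matrix (Fin (t+1)) (Fin (t+1)) (Polynomial ℚ))) = -1 :=
    invOf_eq_right_inv (by rw [neg_mul_neg, one_mul])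
  have h1 : Dt t = (fromBlocks (Lmat (t+1)) (Mmat (t+1)) (Nmat (t+1))
      (-1 : Matrix (Fin (t+1)) (Fin (t+1)) (Polynomial ℚ))).det := by
    rw [Dt, ← Matrix.det_submatrix_equiv_self (blockEquiv t), transfer_eq]
  rw [h1, Matrix.det_fromBlocks₂₂, hinv]
  have h2 : Lmat (t+1) - Mmat (t+1) * -1 * Nmat (t+1) = Bmat (t+1) := by
    rw [mul_neg_one, neg_mul, sub_neg_eq_add, LMN]
  rw [h2, detB]
  have h3 : (-1 : Matrix (Fin (t+1)) (Fin (t+1)) (Polynomial ℚ)).det = (-1)^(t+1) := by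
    rw [show (-1 : Matrix (Fin (t+1)) (Fin (t+1)) (Polynomial ℚ)) = -(1:Matrix _ _ _) from rfl,
      Matrix.det_neg, Matrix.det_one, Fintype.card_fin, mul_one]
  rw [h3, detC_eq, pow_succ]
  ring

open Polynomial in
/-- `D_{t+2} + (x² - x - 1) D_{t+1} + x D_t = 0`, with `D_0 = 1`,
`D_1 = 1 - x²`, and consequently `D_2 = x⁴ - x³ - 2x² + 1` and
`D_3 = -x⁶ + 2x⁵ + 2x⁴ - 2x³ - 3x² + 1`. -/
theorem stmt10 :
    (∀ t : ℕ, Dt (t + 2) + (Polynomial.X ^ 2 - Polynomial.X - 1) * Dt (t + 1) + Polynomial.X * Dt t = 0) ∧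
    Dt 0 = 1 ∧ Dt 1 = 1 - Polynomial.X ^ 2 ∧
    Dt 2 = Polynomial.X ^ 4 - Polynomial.X ^ 3 - 2 * Polynomial.X ^ 2 + 1 ∧
    Dt 3 = -Polynomial.X ^ 6 + 2 * Polynomial.X ^ 5 + 2 * Polynomial.X ^ 4 - 2 * Polynomial.X ^ 3 - 3 * Polynomial.X ^ 2 + 1 := by
  refine ⟨fun t => ?_, ?_, ?_, ?_, ?_⟩
  · rw [Dt_eq, Dt_eq, Dt_eq, eg_rec, pow_succ, pow_succ]
    ring
  · rw [Dt_eq]; simp [eg]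
  · rw [Dt_eq]; simp [eg]; try ring
  · rw [Dt_eq]; simp [eg]; try ring
  · rw [Dt_eq]; simp [eg]; try ring
end

section
/- The generating function for nonempty GDAP bounded between y = 0 and y = 2 counted by length is x^2 (1 + x - x^2)/(x^4 - x^3 - 2x^2 + 1), whose series expansion begins x^2 + x^3 + x^4 + 3x^5 + 2x^6 + 6x^7 + 6x^8 + 11x^9 + 16x^10 + ... -/
/-!
Besides its height, a path in the strip `0 ≤ y ≤ 2` only has to remember whether its last step
was a down-step. This leaves four states (height `0`, height `1` after an up-step, height `1`
after a down-step, height `2`), and the numbers of ways to return to the x-axis in `n` steps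
from each of them satisfy a linear recursion (a transfer matrix). Eliminating the other three
states, the count `a n` from height `0` satisfies `a (n + 5) = 2 a (n + 3) + a (n + 2) - a (n + 1)`:
this is the denominator `1 - 2x² - x³ + x⁴`, and the numerator comes from the first five terms.
-/

open PowerSeries

/-- All points of the path have ordinate in `[0,2]`. -/
def Bounded02 (p : List ℤ) : Prop := ∀ i, 0 ≤ (p.take i).sum ∧ (p.take i).sum ≤ 2

/-- Number of nonempty GDAP of length `n` bounded by `y = 0` and `y = 2`. -/
noncomputable def g02Count (n : ℕ) : ℕ :=
  Nat.card {p : List ℤ // IsGDAP p ∧ p ≠ [] ∧ Bounded02 p ∧ p.length = n}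

noncomputable def G02 : PowerSeries ℚ := PowerSeries.mk fun n => (g02Count n : ℚ)

theorem encard_cons_image {α : Type*} (s : α) (A : Set (List α)) :
    ((s :: ·) '' A).encard = A.encard :=
  List.cons_injective.encard_image A

theorem encard_cons_image_union {α : Type*} {s t : α} (hst : s ≠ t) (A B : Set (List α)) :
    ((s :: ·) '' A ∪ (t :: ·) '' B).encard = A.encard + B.encard := by
  have hdisj : Disjoint ((s :: ·) '' A) ((t :: ·) '' B) := by
    rw [Set.disjoint_left]
    rintro _ ⟨a, -, rfl⟩ ⟨c, -, hc⟩
    exact hst (List.cons.inj hc).1.symm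
  rw [Set.encard_union_eq hdisj, encard_cons_image, encard_cons_image]

/-- A GDAP-step path from height `h` to the x-axis inside the strip `0 ≤ y ≤ m`; `afterDown` says
that the step before `p` was a down-step, so that `p` must start with an up-step. -/
def IsStripPath (m h : ℤ) (afterDown : Bool) (p : List ℤ) : Prop :=
  (∀ s ∈ p, s = 1 ∨ s ≤ -1) ∧ List.IsChain (fun a b => a = 1 ∨ b = 1) p ∧
    (afterDown = true → ∀ s ∈ p.head?, s = 1) ∧ h + p.sum = 0 ∧
    ∀ i, 0 ≤ h + (p.take i).sum ∧ h + (p.take i).sum ≤ m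

def stripPaths (m : ℤ) (n : ℕ) (h : ℤ) (afterDown : Bool) : Set (List ℤ) :=
  {p | IsStripPath m h afterDown p ∧ p.length = n}

section StripPath

variable {m h s : ℤ} {n : ℕ} {b : Bool} {p q : List ℤ}

theorem isStripPath_nil : IsStripPath m h b [] ↔ h = 0 ∧ 0 ≤ m := by
  simp only [IsStripPath, List.not_mem_nil, List.isChain_nil, List.head?_nil, List.sum_nil,
    List.take_nil]
  constructor
  · rintro ⟨-, -, -, h0, hb⟩
    exact ⟨by omega, by have := hb 0; omega⟩
  · rintro ⟨rfl, hm⟩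
    simp [hm]

theorem isStripPath_cons :
    IsStripPath m h b (s :: q) ↔
      (s = 1 ∨ s ≤ -1 ∧ b = false) ∧ 0 ≤ h ∧ h ≤ m ∧ 0 ≤ h + s ∧ h + s ≤ m ∧
        IsStripPath m (h + s) (decide (s < 0)) q := by
  simp only [IsStripPath, List.mem_cons, forall_eq_or_imp, List.isChain_cons, List.head?_cons,
    Option.mem_some_iff, forall_eq', List.sum_cons, decide_eq_true_eq]
  constructor
  · rintro ⟨⟨hs, hq⟩, ⟨hchain, hq'⟩, hhead, hsum, hb⟩
    have hb0 := hb 0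
    have hb1 := hb 1
    simp only [List.take_zero, List.sum_nil, add_zero, List.take_succ_cons, List.sum_cons]
      at hb0 hb1
    refine ⟨?_, by omega, by omega, by omega, by omega, hq, hq', ?_, by omega, fun i => ?_⟩
    · cases b
      · exact hs.imp_right (⟨·, rfl⟩)
      · exact .inl (hhead rfl)
    · intro hs t ht
      exact (hchain t ht).resolve_left (by omega)
    · have := hb (i + 1)
      simp only [List.take_succ_cons, List.sum_cons] at this
      omega
  · rintro ⟨hs, h0, hm, hs0, hsm, hq, hq', hhead, hsum, hb⟩
    refine ⟨⟨by omega, hq⟩, ⟨fun t ht => ?_, hq'⟩, ?_, by omega, ?_⟩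
    · by_cases hs1 : s = 1
      · exact .inl hs1
      · exact .inr (hhead (by omega) t ht)
    · rintro rfl
      simpa using hs
    · rintro (_ | i)
      · simp [h0, hm]
      · have := hb i
        simp only [List.take_succ_cons, List.sum_cons]
        omega

theorem isStripPath_zero_true : IsStripPath m 0 true p ↔ IsStripPath m 0 false p := by
  cases p with
  | nil => simp only [isStripPath_nil]
  | cons s q =>
    simp only [isStripPath_cons]
    constructor
    · rintro ⟨hs, rest⟩; exact ⟨by omega, rest⟩
    · rintro ⟨hs, rest⟩; exact ⟨by omega, rest⟩

theorem stripPaths_zero (hm : 0 ≤ m) : stripPaths m 0 h b = if h = 0 then {[]} else ∅ := by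
  ext (_ | ⟨s, q⟩) <;> split_ifs with h0 <;> simp [stripPaths, isStripPath_nil, h0, hm]

theorem stripPaths_zero_true : stripPaths m n 0 true = stripPaths m n 0 false := by
  ext p
  simp only [stripPaths, Set.mem_ofPred_eq, isStripPath_zero_true]

theorem mem_stripPaths_succ :
    p ∈ stripPaths m (n + 1) h b ↔ ∃ s q, p = s :: q ∧ (s = 1 ∨ s ≤ -1 ∧ b = false) ∧
      0 ≤ h ∧ h ≤ m ∧ 0 ≤ h + s ∧ h + s ≤ m ∧ q ∈ stripPaths m n (h + s) (decide (s < 0)) := by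
  cases p with
  | nil => simp [stripPaths]
  | cons s q => simp [stripPaths, isStripPath_cons, and_assoc]

end StripPath

/-- The states of the strip `0 ≤ y ≤ 2` that a path can be in: its height, and at height `1`
whether the previous step was a down-step. At height `0` that makes no difference
(`stripPaths_zero_true`), and height `2` cannot be reached by a down-step. -/
inductive StripState
  | ground
  | mid
  | midAfterDown
  | top

namespace StripState

def height : StripState → ℤ
  | ground => 0
  | mid | midAfterDown => 1
  | top => 2

def afterDown : StripState → Bool
  | midAfterDown => true
  | _ => false

def pathCount : ℕ → StripState → ℕ
  | 0, ground => 1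
  | 0, _ => 0
  | n + 1, ground => pathCount n mid
  | n + 1, mid => pathCount n top + pathCount n ground
  | n + 1, midAfterDown => pathCount n top
  | n + 1, top => pathCount n midAfterDown + pathCount n ground

end StripState

open StripState

section Transitions

variable {n : ℕ}

theorem stripPaths_ground_succ :
    stripPaths 2 (n + 1) 0 false = (1 :: ·) '' stripPaths 2 n 1 false := by
  ext p
  simp only [mem_stripPaths_succ, Set.mem_image]
  constructor
  · rintro ⟨s, q, rfl, hs, -, -, hs0, -, hq⟩
    obtain rfl : s = 1 := by omega
    exact ⟨q, by simpa using hq, rfl⟩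
  · rintro ⟨q, hq, rfl⟩
    exact ⟨1, q, rfl, by simpa using hq⟩

theorem stripPaths_mid_succ :
    stripPaths 2 (n + 1) 1 false =
      (1 :: ·) '' stripPaths 2 n 2 false ∪ (-1 :: ·) '' stripPaths 2 n 0 false := by
  ext p
  simp only [mem_stripPaths_succ, Set.mem_union, Set.mem_image]
  constructor
  · rintro ⟨s, q, rfl, hs, -, -, hs0, hs2, hq⟩
    obtain rfl | rfl : s = 1 ∨ s = -1 := by omega
    · exact .inl ⟨q, by simpa using hq, rfl⟩
    · exact .inr ⟨q, by simpa [stripPaths_zero_true] using hq, rfl⟩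
  · rintro (⟨q, hq, rfl⟩ | ⟨q, hq, rfl⟩)
    · exact ⟨1, q, rfl, by simpa using hq⟩
    · exact ⟨-1, q, rfl, by simpa [stripPaths_zero_true] using hq⟩

theorem stripPaths_midAfterDown_succ :
    stripPaths 2 (n + 1) 1 true = (1 :: ·) '' stripPaths 2 n 2 false := by
  ext p
  simp only [mem_stripPaths_succ, Set.mem_image]
  constructor
  · rintro ⟨s, q, rfl, hs, -, -, -, -, hq⟩
    obtain rfl : s = 1 := by simpa using hs
    exact ⟨q, by simpa using hq, rfl⟩
  · rintro ⟨q, hq, rfl⟩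
    exact ⟨1, q, rfl, by simpa using hq⟩

theorem stripPaths_top_succ :
    stripPaths 2 (n + 1) 2 false =
      (-1 :: ·) '' stripPaths 2 n 1 true ∪ (-2 :: ·) '' stripPaths 2 n 0 false := by
  ext p
  simp only [mem_stripPaths_succ, Set.mem_union, Set.mem_image]
  constructor
  · rintro ⟨s, q, rfl, hs, -, -, hs0, hs2, hq⟩
    obtain rfl | rfl : s = -1 ∨ s = -2 := by omega
    · exact .inl ⟨q, by simpa using hq, rfl⟩
    · exact .inr ⟨q, by simpa [stripPaths_zero_true] using hq, rfl⟩
  · rintro (⟨q, hq, rfl⟩ | ⟨q, hq, rfl⟩)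
    · exact ⟨-1, q, rfl, by simpa using hq⟩
    · exact ⟨-2, q, rfl, by simpa [stripPaths_zero_true] using hq⟩

end Transitions

theorem encard_stripPaths (n : ℕ) (σ : StripState) :
    (stripPaths 2 n σ.height σ.afterDown).encard = σ.pathCount n := by
  induction n generalizing σ with
  | zero => cases σ <;> simp [stripPaths_zero, height, afterDown, pathCount]
  | succ n ih =>
    cases σ <;> simp only [pathCount, Nat.cast_add, ← ih, height, afterDown]
    · rw [stripPaths_ground_succ, encard_cons_image]
    · rw [stripPaths_mid_succ, encard_cons_image_union (by norm_num)]
    · rw [stripPaths_midAfterDown_succ, encard_cons_image]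
    · rw [stripPaths_top_succ, encard_cons_image_union (by norm_num)]

theorem isStripPath_two_zero_false_iff {p : List ℤ} :
    IsStripPath 2 0 false p ↔ IsGDAP p ∧ Bounded02 p := by
  simp only [IsStripPath, IsGDAP, GoodSteps, Bounded02, zero_add, Bool.false_eq_true,
    false_implies, true_and]
  exact ⟨fun ⟨hs, hc, h0, hb⟩ => ⟨⟨⟨hs, hc⟩, h0⟩, hb⟩, fun ⟨⟨⟨hs, hc⟩, h0⟩, hb⟩ => ⟨hs, hc, h0, hb⟩⟩

theorem g02Count_zero : g02Count 0 = 0 := by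
  rw [g02Count, Nat.card_eq_zero]
  exact .inl ⟨fun ⟨p, hp⟩ => hp.2.1 (List.length_eq_zero_iff.mp hp.2.2.2)⟩

theorem g02Count_eq_pathCount {n : ℕ} (hn : n ≠ 0) : g02Count n = ground.pathCount n := by
  have hpaths : {p : List ℤ | IsGDAP p ∧ p ≠ [] ∧ Bounded02 p ∧ p.length = n} =
      stripPaths 2 n 0 false := by
    ext p
    simp only [stripPaths, Set.mem_ofPred_eq, isStripPath_two_zero_false_iff]
    constructor
    · rintro ⟨hg, -, hb, hl⟩
      exact ⟨⟨hg, hb⟩, hl⟩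
    · rintro ⟨⟨hg, hb⟩, hl⟩
      exact ⟨hg, by rintro rfl; exact hn hl.symm, hb, hl⟩
  rw [g02Count, ← Set.coe_ofPred, hpaths, Nat.card_coe_set_eq, Set.ncard_def]
  exact congrArg ENat.toNat (encard_stripPaths n ground)

theorem pathCount_ground_add_five (n : ℕ) :
    ground.pathCount (n + 5) + ground.pathCount (n + 1) =
      2 * ground.pathCount (n + 3) + ground.pathCount (n + 2) := by
  simp only [pathCount]
  ring

theorem g02Count_add_five (n : ℕ) :
    (g02Count (n + 5) : ℚ) = 2 * g02Count (n + 3) + g02Count (n + 2) - g02Count (n + 1) := by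
  simp only [g02Count_eq_pathCount (Nat.succ_ne_zero _)]
  rw [eq_sub_iff_add_eq]
  exact_mod_cast pathCount_ground_add_five n

theorem G02_mul_denominator :
    G02 * (X ^ 4 - X ^ 3 - 2 * X ^ 2 + 1) = X ^ 2 * (1 + X - X ^ 2) := by
  have hlhs : G02 * (X ^ 4 - X ^ 3 - 2 * X ^ 2 + 1) =
      G02 * X ^ 4 - G02 * X ^ 3 - (G02 * X ^ 2 + G02 * X ^ 2) + G02 := by ring
  have hrhs : (X ^ 2 * (1 + X - X ^ 2) : PowerSeries ℚ) = X ^ 2 + X ^ 3 - X ^ 4 := by ring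
  ext n
  rw [hlhs, hrhs]
  simp only [map_add, map_sub, coeff_mul_X_pow', coeff_X_pow, G02, coeff_mk]
  rcases lt_or_ge n 5 with hn | hn
  · interval_cases n <;> simp [g02Count_zero, g02Count_eq_pathCount, pathCount]
  · obtain ⟨m, rfl⟩ := Nat.exists_eq_add_of_le' hn
    simp only [show m + 5 - 4 = m + 1 by omega, show m + 5 - 3 = m + 2 by omega,
      show m + 5 - 2 = m + 3 by omega, g02Count_add_five]
    split_ifs <;> first | omega | ring

/-- the o.g.f. of nonempty GDAP bounded by `y = 0` and `y = 2` is
`x²(1+x-x²)/(x⁴-x³-2x²+1)`, with series beginning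
`x² + x³ + x⁴ + 3x⁵ + 2x⁶ + 6x⁷ + 6x⁸ + 11x⁹ + 16x¹⁰ + ⋯`. -/
theorem stmt12 :
    G02 * (X ^ 4 - X ^ 3 - 2 * X ^ 2 + 1) = X ^ 2 * (1 + X - X ^ 2) ∧
    g02Count 0 = 0 ∧ g02Count 1 = 0 ∧ g02Count 2 = 1 ∧ g02Count 3 = 1 ∧
    g02Count 4 = 1 ∧ g02Count 5 = 3 ∧ g02Count 6 = 2 ∧ g02Count 7 = 6 ∧
    g02Count 8 = 6 ∧ g02Count 9 = 11 ∧ g02Count 10 = 16 := by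
  refine ⟨G02_mul_denominator, g02Count_zero, ?_⟩
  simp only [g02Count_eq_pathCount (Nat.succ_ne_zero _)]
  decide
end

section
/- For every n >= 2, there is an explicit bijection psi between the set of GDAP of length n bounded between y = 0 and y = 2 and the set of compositions of n - 2 in which no two consecutive parts have the same parity; psi is obtained by deleting the first and last step, cutting the remaining path after each up-step followed by another up-step or by a D_2-step, and recording the lengths of the resulting blocks. -/
/-!
Remove the first step (an up-step) and the last one (the down-step back to the axis); what is
left is a word starting at height 1. Between two cuts, an up-step can only be followed by `D₁`
and a down-step only by `U`, so a block is determined by its first step and its length: it is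
`U D₁ U ⋯ U` of odd length, climbing from height 1 to 2, or `D₁ U ⋯ U` (first block only) or
`D₂ U ⋯ U` of even length, ending at height 1. A block after a cut starts with `U` or `D₂`; the
bound `[0, 2]` allows `U` only at height 1, i.e. after an even block, and `D₂` only at height 2,
i.e. after an odd block, so consecutive parts have opposite parities. Conversely, concatenating
these blocks along a composition with alternating parities inverts the map.
-/

open PowerSeries

/-- `c` is a composition of `m`. -/
def IsComposition (c : List ℕ) (m : ℕ) : Prop := (∀ x ∈ c, 0 < x) ∧ c.sum = m

/-- No two consecutive parts have the same parity. -/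
def AltParity (c : List ℕ) : Prop := List.Chain' (fun a b => a % 2 ≠ b % 2) c

/-- The cutting positions of a step sequence `l`: we cut after each up-step which is
followed by another up-step or by a `D₂`-step. -/
def cutsSet (l : List ℤ) : Set ℕ :=
  {s | 0 < s ∧ s < l.length ∧ l[s - 1]? = some 1 ∧ (l[s]? = some 1 ∨ l[s]? = some (-2))}

/-- `c` is the composition recording the lengths of the blocks of `l` obtained by cutting
`l` at exactly the positions of `cutsSet l`: its parts are positive, they sum to the
length of `l`, and its proper nonempty prefix sums are exactly the cutting positions. -/
def CutComp (l : List ℤ) (c : List ℕ) : Prop :=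
  IsComposition c l.length ∧
  ∀ s : ℕ, (∃ t, t <+: c ∧ t ≠ [] ∧ t ≠ c ∧ t.sum = s) ↔ s ∈ cutsSet l


namespace List

variable {α : Type*}

theorem isChain_iterate (f : α → α) (a : α) (n : ℕ) :
    (iterate f a n).IsChain fun x y => y = f x := by
  induction n generalizing a with
  | zero => exact isChain_nil
  | succ n ih =>
    refine isChain_cons.2 ⟨fun y hy => ?_, ih (f a)⟩
    cases n <;> simp_all [iterate]

theorem eq_iterate_of_isChain {f : α → α} {a : α} {l : List α}
    (h : (a :: l).IsChain fun x y => y = f x) : a :: l = iterate f a (l.length + 1) := by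
  induction l generalizing a with
  | nil => rfl
  | cons b l ih =>
    obtain ⟨rfl, h⟩ := isChain_cons_cons.1 h
    exact congrArg (a :: ·) (ih h)

theorem getLast?_iterate (f : α → α) (a : α) (k : ℕ) :
    (iterate f a (k + 1)).getLast? = some (f^[k] a) := by
  rw [getLast?_eq_getElem?, length_iterate, getElem?_iterate _ _ _ _ (by omega)]
  rfl

theorem IsChain.and {R S : α → α → Prop} {l : List α} (hR : l.IsChain R) (hS : l.IsChain S) :
    l.IsChain fun x y => R x y ∧ S x y :=
  isChain_iff_getElem.2 fun i hi => ⟨hR.getElem i hi, hS.getElem i hi⟩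

theorem splitBy_flatten_cons {r : α → α → Bool} {g : List α} {L : List (List α)}
    (h : (g :: L).flatten.splitBy r = g :: L) :
    g ≠ [] ∧ g.IsChain (fun x y => r x y) ∧ L.flatten.splitBy r = L ∧
      ∀ x ∈ g.getLast?, ∀ y ∈ L.flatten.head?, r x y = false := by
  obtain ⟨-, hne, hchain, hcut⟩ := splitBy_eq_iff.1 h
  rw [mem_cons, not_or] at hne
  refine ⟨Ne.symm hne.1, hchain g mem_cons_self,
    splitBy_eq_iff.2 ⟨rfl, hne.2, fun m hm => hchain m (mem_cons_of_mem _ hm), hcut.tail⟩, ?_⟩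
  intro x hx y hy
  cases L with
  | nil => simp at hy
  | cons g' L =>
    obtain ⟨hg, hg', hr⟩ := (isChain_cons_cons.1 hcut).1
    have hne' : g' ≠ [] := fun h => hne.2 (h ▸ mem_cons_self)
    rw [flatten_cons, head?_append_of_ne_nil _ hne', head?_eq_some_head hne'] at hy
    rw [getLast?_eq_some_getLast hg] at hx
    cases hx; cases hy
    exact hr

end List

namespace BoundedGDAP

open List

def IsProperPartialSum (c : List ℕ) (s : ℕ) : Prop :=
  ∃ t, t <+: c ∧ t ≠ [] ∧ t ≠ c ∧ t.sum = s

theorem not_isProperPartialSum_nil (s : ℕ) : ¬ IsProperPartialSum [] s := by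
  rintro ⟨t, ht, hne, -⟩
  exact hne (prefix_nil.1 ht)

theorem isProperPartialSum_cons {m s : ℕ} {c : List ℕ} :
    IsProperPartialSum (m :: c) s ↔
      (s = m ∧ c ≠ []) ∨ ∃ s', IsProperPartialSum c s' ∧ s = m + s' := by
  constructor
  · rintro ⟨t, ht, hne, hproper, rfl⟩
    obtain rfl | ⟨t, rfl, ht'⟩ := prefix_cons_iff.1 ht
    · exact absurd rfl hne
    cases t with
    | nil => exact Or.inl ⟨by simp, by rintro rfl; exact hproper rfl⟩
    | cons x t =>
      exact Or.inr ⟨_, ⟨x :: t, ht', cons_ne_nil _ _, fun h => hproper (h ▸ rfl), rfl⟩, by simp⟩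
  · rintro (⟨rfl, hc⟩ | ⟨s', ⟨t, ht, hne, hproper, rfl⟩, rfl⟩)
    · exact ⟨[s], by simp, cons_ne_nil _ _, by simpa using hc.symm, by simp⟩
    · exact ⟨m :: t, by simpa using ht, cons_ne_nil _ _, by simpa using hproper, by simp⟩

section splitBy

variable {α : Type*} (r : α → α → Bool)

def IsBreak (w : List α) (s : ℕ) : Prop :=
  0 < s ∧ ∃ a b, w[s - 1]? = some a ∧ w[s]? = some b ∧ r a b = false

variable {r}

theorem isBreak_append {g F : List α} (hg : g ≠ []) (hchain : g.IsChain fun x y => r x y)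
    (hbound : ∀ x ∈ g.getLast?, ∀ y ∈ F.head?, r x y = false) (s : ℕ) :
    IsBreak r (g ++ F) s ↔
      (s = g.length ∧ F ≠ []) ∨ (g.length < s ∧ IsBreak r F (s - g.length)) := by
  have hlen := length_pos_of_ne_nil hg
  rcases lt_trichotomy s g.length with hs | rfl | hs
  · simp only [IsBreak, hs.ne, hs.not_gt, false_and, or_self, iff_false, not_and, not_exists]
    intro hs0 a b ha hb hab
    rw [getElem?_append_left (by omega), getElem?_eq_some_iff] at ha hb
    obtain ⟨_, rfl⟩ := ha
    obtain ⟨_, rfl⟩ := hb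
    have := hchain.getElem (s - 1) (by omega)
    simp_all [Nat.sub_add_cancel hs0]
  · simp only [IsBreak, lt_irrefl, false_and, or_false, true_and, hlen]
    rw [getElem?_append_left (by omega), ← getLast?_eq_getElem?, getElem?_append_right le_rfl,
      Nat.sub_self, ← head?_eq_getElem?]
    constructor
    · rintro ⟨a, b, -, hb, -⟩ rfl
      simp at hb
    · intro hF
      obtain ⟨y, F, rfl⟩ := exists_cons_of_ne_nil hF
      obtain ⟨x, hx⟩ := Option.isSome_iff_exists.1 (getLast?_isSome.2 hg)
      exact ⟨x, y, hx, rfl, hbound x hx y rfl⟩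
  · simp only [IsBreak, hs.ne', false_and, false_or, hs, true_and, Nat.sub_pos_of_lt hs]
    rw [getElem?_append_right (by omega), getElem?_append_right hs.le,
      show s - 1 - g.length = s - g.length - 1 by omega]
    simp only [and_iff_right_iff_imp]
    omega

theorem isProperPartialSum_map_length_iff {L : List (List α)} (hL : L.flatten.splitBy r = L)
    (s : ℕ) : IsProperPartialSum (L.map length) s ↔ IsBreak r L.flatten s := by
  induction L generalizing s with
  | nil => simp [not_isProperPartialSum_nil, IsBreak]
  | cons g L ih =>
    obtain ⟨hg, hchain, hL', hbound⟩ := splitBy_flatten_cons hL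
    have hF : L.map length ≠ [] ↔ L.flatten ≠ [] := by
      cases L with
      | nil => simp
      | cons g' L => simp [flatten_cons, (splitBy_flatten_cons hL').1]
    rw [map_cons, isProperPartialSum_cons, flatten_cons, isBreak_append hg hchain hbound, hF]
    refine or_congr Iff.rfl ⟨?_, fun ⟨hs, hb⟩ => ⟨s - g.length, (ih hL' _).2 hb, by omega⟩⟩
    rintro ⟨s', hs', rfl⟩
    have hb := (ih hL' s').1 hs'
    exact ⟨by have := hb.1; omega, by simpa using hb⟩

end splitBy

def BoundedFrom (h : ℤ) (w : List ℤ) : Prop :=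
  ∀ i, 0 ≤ h + (w.take i).sum ∧ h + (w.take i).sum ≤ 2

section BoundedFrom

variable {h : ℤ} {w : List ℤ}

theorem bounded02_iff (p : List ℤ) : Bounded02 p ↔ BoundedFrom 0 p := by
  simp [Bounded02, BoundedFrom]

theorem BoundedFrom.start (hb : BoundedFrom h w) : 0 ≤ h ∧ h ≤ 2 := by
  simpa using hb 0

theorem boundedFrom_nil : BoundedFrom h [] ↔ 0 ≤ h ∧ h ≤ 2 := by
  simp [BoundedFrom]

theorem boundedFrom_cons {a : ℤ} :
    BoundedFrom h (a :: w) ↔ (0 ≤ h ∧ h ≤ 2) ∧ BoundedFrom (h + a) w := by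
  refine ⟨fun hb => ⟨hb.start, fun i => ?_⟩, fun ⟨h0, hb⟩ i => ?_⟩
  · simpa [add_assoc] using hb (i + 1)
  · cases i with
    | zero => simpa using h0
    | succ i => simpa [add_assoc] using hb i

theorem boundedFrom_append {u v : List ℤ} :
    BoundedFrom h (u ++ v) ↔ BoundedFrom h u ∧ BoundedFrom (h + u.sum) v := by
  induction u generalizing h with
  | nil =>
    exact ⟨fun hb => ⟨boundedFrom_nil.2 hb.start, by simpa using hb⟩, fun hb => by simpa using hb.2⟩
  | cons a u ih => simp only [cons_append, boundedFrom_cons, ih, sum_cons, add_assoc, and_assoc]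

theorem BoundedFrom.head_step (hb : BoundedFrom h w) {a : ℤ} (ha : a ∈ w.head?) :
    0 ≤ h + a ∧ h + a ≤ 2 := by
  cases w with
  | nil => simp at ha
  | cons b w =>
    obtain rfl : b = a := by simpa using ha
    exact (boundedFrom_cons.1 hb).2.start

theorem BoundedFrom.step_mem (hb : BoundedFrom h w) {x : ℤ} (hx : x ∈ w) : -2 ≤ x ∧ x ≤ 2 := by
  obtain ⟨u, v, rfl⟩ := mem_iff_append.1 hx
  obtain ⟨⟨h0, h2⟩, hv⟩ := boundedFrom_cons.1 (boundedFrom_append.1 hb).2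
  have := hv.start
  omega

end BoundedFrom

def stepAfter (a : ℤ) : ℤ := if a = 1 then -1 else 1

theorem stepAfter_iterate_one (k : ℕ) : stepAfter^[k] 1 = if k % 2 = 0 then 1 else -1 := by
  induction k with
  | zero => rfl
  | succ k ih =>
    rw [Function.iterate_succ_apply', ih]
    split_ifs <;> simp_all [stepAfter] <;> omega

theorem stepAfter_iterate_eq_one (a : ℤ) (k : ℕ) :
    stepAfter^[k] a = 1 ↔ (k % 2 = 0 ↔ a = 1) := by
  by_cases ha : a = 1
  · subst ha
    rw [stepAfter_iterate_one]
    split_ifs <;> simp_all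
  · cases k with
    | zero => simp [ha]
    | succ k =>
      rw [Function.iterate_succ_apply, stepAfter, if_neg ha, stepAfter_iterate_one]
      split_ifs <;> simp [ha] <;> omega

theorem sum_iterate_stepAfter_one (k : ℕ) : (iterate stepAfter 1 k).sum = (k % 2 : ℕ) := by
  induction k with
  | zero => rfl
  | succ k ih =>
    rw [iterate_add, sum_append, ih, stepAfter_iterate_one]
    split_ifs <;> simp <;> omega

theorem boundedFrom_iterate_stepAfter_one {h : ℤ} (h0 : 0 ≤ h) (h1 : h ≤ 1) (k : ℕ) :
    BoundedFrom h (iterate stepAfter 1 k) := fun i => by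
  rw [take_iterate, sum_iterate_stepAfter_one]
  omega

def blockHead (h : ℤ) (m : ℕ) : ℤ := if m % 2 = 1 then 1 else -h

/-- The block of length `m` entered at height `h`: `U D₁ ⋯ U` if `m` is odd, else `D_h U D₁ ⋯ U`. -/
def block (h : ℤ) (m : ℕ) : List ℤ := iterate stepAfter (blockHead h m) m

def nextHeight (m : ℕ) : ℤ := if m % 2 = 1 then 2 else 1

def blocks : ℤ → List ℕ → List (List ℤ)
  | _, [] => []
  | h, m :: c => block h m :: blocks (nextHeight m) c

def frame (w : List ℤ) : List ℤ := 1 :: (w ++ [-(1 + w.sum)])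

def decode (c : List ℕ) : List ℤ := frame (blocks 1 c).flatten

def IsCut (a b : ℤ) : Prop := a = 1 ∧ (b = 1 ∨ b = -2)

def notCut (a b : ℤ) : Bool := !(a == 1 && (b == 1 || b == -2))

def cutLengths (w : List ℤ) : List ℕ := (w.splitBy notCut).map length

theorem notCut_eq_false {a b : ℤ} : notCut a b = false ↔ IsCut a b := by
  simp [notCut, IsCut]
  tauto

theorem isBreak_notCut_iff_mem_cutsSet (w : List ℤ) (s : ℕ) :
    IsBreak notCut w s ↔ s ∈ cutsSet w := by
  constructor
  · rintro ⟨hs, a, b, ha, hb, hab⟩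
    obtain ⟨rfl, hb1⟩ := notCut_eq_false.1 hab
    refine ⟨hs, (List.getElem?_eq_some_iff.1 hb).1, ha, ?_⟩
    rcases hb1 with rfl | rfl
    exacts [Or.inl hb, Or.inr hb]
  · rintro ⟨hs, hlt, ha, hb⟩
    refine ⟨hs, 1, w[s], ha, getElem?_eq_getElem hlt, notCut_eq_false.2 ⟨rfl, ?_⟩⟩
    rw [getElem?_eq_getElem hlt, Option.some_inj, Option.some_inj] at hb
    exact hb

theorem cutComp_cutLengths (w : List ℤ) : CutComp w (cutLengths w) := by
  refine ⟨⟨fun m hm => ?_, ?_⟩, fun s => ?_⟩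
  · obtain ⟨g, hg, rfl⟩ := mem_map.1 hm
    exact length_pos_of_ne_nil (ne_nil_of_mem_splitBy hg)
  · rw [cutLengths, ← length_flatten, flatten_splitBy]
  · have := isProperPartialSum_map_length_iff (r := notCut) (L := w.splitBy notCut)
      (by rw [flatten_splitBy]) s
    rwa [flatten_splitBy, isBreak_notCut_iff_mem_cutsSet] at this

section block

variable {h : ℤ} {m : ℕ}

@[simp] theorem length_block : (block h m).length = m := length_iterate _ _ _

theorem block_ne_nil (hm : 0 < m) : block h m ≠ [] := ne_nil_of_length_pos (by simpa using hm)

theorem head?_block (hm : 0 < m) : (block h m).head? = some (blockHead h m) := by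
  obtain ⟨k, rfl⟩ := Nat.exists_eq_add_of_lt hm
  rfl

theorem getLast?_block (hh : 0 < h) (hm : 0 < m) : (block h m).getLast? = some 1 := by
  obtain ⟨k, rfl⟩ := Nat.exists_eq_add_of_lt hm
  rw [block, getLast?_iterate, Option.some_inj, stepAfter_iterate_eq_one, blockHead]
  split_ifs <;> omega

theorem isChain_block : (block h m).IsChain fun x y => y = stepAfter x := isChain_iterate _ _ _

theorem mem_block (hh : 0 < h) {x : ℤ} (hx : x ∈ block h m) : x = 1 ∨ x ≤ -1 := by
  obtain ⟨i, -, rfl⟩ := mem_iterate.1 hx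
  cases i with
  | zero => simp only [Function.iterate_zero, id, blockHead]; split_ifs <;> omega
  | succ i => rw [Function.iterate_succ_apply', stepAfter]; split_ifs <;> simp

theorem block_eq_cons (hh : h ≠ -1) (hm : m % 2 = 0) (hm0 : 0 < m) :
    block h m = -h :: iterate stepAfter 1 (m - 1) := by
  obtain ⟨k, rfl⟩ := Nat.exists_eq_add_of_lt hm0
  simp only [block, blockHead, if_neg (by omega : ¬ (0 + k + 1) % 2 = 1)]
  rw [show 0 + k + 1 = k + 1 by omega, iterate, stepAfter, if_neg (by omega)]
  rfl

theorem boundedFrom_block (hh : h = 1 ∨ h = 2 ∧ m % 2 = 0) (hm : 0 < m) :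
    BoundedFrom h (block h m) ∧ h + (block h m).sum = nextHeight m := by
  by_cases hodd : m % 2 = 1
  · obtain rfl : h = 1 := by omega
    have hblock : block 1 m = iterate stepAfter 1 m := by simp [block, blockHead, hodd]
    rw [hblock, sum_iterate_stepAfter_one, nextHeight, if_pos hodd, hodd]
    exact ⟨boundedFrom_iterate_stepAfter_one zero_le_one le_rfl m, by norm_num⟩
  · rw [block_eq_cons (by omega) (by omega) hm, boundedFrom_cons, sum_cons,
      sum_iterate_stepAfter_one, nextHeight, if_neg hodd]
    have hb := boundedFrom_iterate_stepAfter_one le_rfl zero_le_one (m - 1)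
    refine ⟨⟨⟨by omega, by omega⟩, by simpa using hb⟩, ?_⟩
    omega

end block

section blocks

variable {h : ℤ} {c : List ℕ}

@[simp] theorem map_length_blocks : (blocks h c).map length = c := by
  induction c generalizing h with
  | nil => rfl
  | cons m c ih => simp [blocks, ih]

theorem length_flatten_blocks : (blocks h c).flatten.length = c.sum := by
  rw [length_flatten, map_length_blocks]

theorem nextHeight_pos (m : ℕ) : 0 < nextHeight m := by
  unfold nextHeight
  split_ifs <;> norm_num

theorem exists_eq_block_of_mem_blocks {w : List ℤ} (hw : w ∈ blocks h c) :
    ∃ h', ∃ m ∈ c, w = block h' m := by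
  induction c generalizing h with
  | nil => simp [blocks] at hw
  | cons m c ih =>
    rcases mem_cons.1 hw with rfl | hw
    · exact ⟨h, m, mem_cons_self, rfl⟩
    · obtain ⟨h', m', hm', rfl⟩ := ih hw
      exact ⟨h', m', mem_cons_of_mem _ hm', rfl⟩

theorem goodSteps_flatten_blocks (hh : 0 < h) (hc : ∀ m ∈ c, 0 < m) :
    GoodSteps (blocks h c).flatten ∧ ∀ x ∈ (blocks h c).flatten.getLast?, x = 1 := by
  induction c generalizing h with
  | nil => exact ⟨⟨by simp [blocks], isChain_nil⟩, by simp [blocks]⟩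
  | cons m c ih =>
    have hm := hc m mem_cons_self
    obtain ⟨⟨hmem, hchain⟩, hlast⟩ :=
      ih (nextHeight_pos m) fun x hx => hc x (mem_cons_of_mem _ hx)
    have hlast_block := getLast?_block hh hm
    simp only [blocks, flatten_cons]
    refine ⟨⟨fun x hx => ?_, isChain_append.2 ⟨?_, hchain, ?_⟩⟩, ?_⟩
    · rcases mem_append.1 hx with hx | hx
      exacts [mem_block hh hx, hmem x hx]
    · exact isChain_block.imp fun x y hy => by rw [hy, stepAfter]; split_ifs <;> simp_all
    · simp [hlast_block]
    · rw [getLast?_append, hlast_block]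
      intro x hx
      cases hw : (blocks (nextHeight m) c).flatten.getLast? <;> simp_all

theorem boundedFrom_flatten_blocks (hc : ∀ m ∈ c, 0 < m) (halt : AltParity c)
    (hh : h = 1 ∨ h = 2 ∧ ∀ m ∈ c.head?, m % 2 = 0) :
    BoundedFrom h (blocks h c).flatten ∧
      (h + (blocks h c).flatten.sum = 1 ∨ h + (blocks h c).flatten.sum = 2) := by
  induction c generalizing h with
  | nil =>
    simp only [blocks, flatten_nil, boundedFrom_nil, sum_nil, add_zero]
    omega
  | cons m c ih =>
    obtain ⟨hb, hsum⟩ := boundedFrom_block (h := h) (m := m) (by simp_all) (hc m mem_cons_self)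
    have hnext : nextHeight m = 1 ∨ nextHeight m = 2 ∧ ∀ m' ∈ c.head?, m' % 2 = 0 := by
      unfold nextHeight
      split_ifs with hm
      · refine Or.inr ⟨rfl, fun m' hm' => ?_⟩
        cases c with
        | nil => simp at hm'
        | cons m'' c =>
          have := (isChain_cons_cons.1 halt).1
          simp_all
          omega
      · exact Or.inl rfl
    obtain ⟨ihb, ihs⟩ := ih (fun x hx => hc x (mem_cons_of_mem _ hx)) halt.tail hnext
    simp only [blocks, flatten_cons, boundedFrom_append, sum_append, hsum, ← add_assoc]
    exact ⟨⟨hb, ihb⟩, ihs⟩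

theorem isChain_cut_blocks (hh : 0 < h) (hc : ∀ m ∈ c, 0 < m) (halt : AltParity c) :
    (blocks h c).IsChain fun u v => ∃ hu hv, notCut (u.getLast hu) (v.head hv) = false := by
  induction c generalizing h with
  | nil => exact isChain_nil
  | cons m c ih =>
    refine isChain_cons.2 ⟨fun v hv => ?_, ih (nextHeight_pos m)
      (fun x hx => hc x (mem_cons_of_mem _ hx)) halt.tail⟩
    cases c with
    | nil => simp [blocks] at hv
    | cons m' c =>
      obtain rfl : v = block (nextHeight m) m' := by simpa [blocks] using hv.symm
      have hm := hc m mem_cons_self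
      have hm' := hc m' (by simp)
      have hpar := (isChain_cons_cons.1 halt).1
      refine ⟨block_ne_nil hm, block_ne_nil hm', notCut_eq_false.2 ⟨?_, ?_⟩⟩
      · simpa [getLast?_block hh hm] using
          (getLast?_eq_some_getLast (block_ne_nil (h := h) hm)).symm
      · have := head?_block (h := nextHeight m) hm'
        rw [head?_eq_some_head (block_ne_nil hm'), Option.some_inj] at this
        rw [this, blockHead, nextHeight]
        split_ifs <;> omega

theorem cutLengths_flatten_blocks (hh : 0 < h) (hc : ∀ m ∈ c, 0 < m) (halt : AltParity c) :
    cutLengths (blocks h c).flatten = c := by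
  have hsplit : (blocks h c).flatten.splitBy notCut = blocks h c := by
    refine splitBy_flatten (fun hnil => ?_) (fun w hw => ?_) (isChain_cut_blocks hh hc halt)
    · obtain ⟨h', m, hm, hblock⟩ := exists_eq_block_of_mem_blocks hnil
      have := congrArg length hblock
      simp only [length_nil, length_block] at this
      exact (hc m hm).ne this
    · obtain ⟨h', m, -, rfl⟩ := exists_eq_block_of_mem_blocks hw
      refine isChain_block.imp fun x y hy => ?_
      rw [hy, stepAfter]
      split_ifs <;> simp_all [notCut]
  rw [cutLengths, hsplit, map_length_blocks]

end blocks

section frame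

variable {w : List ℤ}

theorem frame_tail_dropLast : (frame w).tail.dropLast = w := by
  simp [frame]

theorem length_frame : (frame w).length = w.length + 2 := by
  simp [frame]

theorem frame_valid (hw : GoodSteps w) (hb : BoundedFrom 1 w) (hs : 0 ≤ w.sum)
    (hl : ∀ x ∈ w.getLast?, x = 1) : IsGDAP (frame w) ∧ Bounded02 (frame w) := by
  obtain ⟨hmem, hchain⟩ := hw
  refine ⟨⟨⟨fun x hx => ?_, ?_⟩, by simp [frame]⟩, ?_⟩
  · simp only [frame, mem_cons, mem_append, not_mem_nil, or_false] at hx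
    rcases hx with rfl | hx | rfl
    exacts [Or.inl rfl, hmem x hx, Or.inr (by omega)]
  · refine isChain_cons.2 ⟨by simp, isChain_append.2 ⟨hchain, isChain_singleton _, ?_⟩⟩
    intro x hx _ _
    exact Or.inl (hl x hx)
  · rw [bounded02_iff, frame, boundedFrom_cons, zero_add, boundedFrom_append]
    have hend := hb w.length
    rw [take_length] at hend
    refine ⟨by norm_num, hb, boundedFrom_cons.2 ⟨hend, boundedFrom_nil.2 ?_⟩⟩
    omega

theorem exists_eq_frame {p : List ℤ} (hg : IsGDAP p) (hne : p ≠ []) (hb : Bounded02 p) :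
    ∃ w, p = frame w ∧ GoodSteps w ∧ BoundedFrom 1 w ∧ ∀ x ∈ w.getLast?, x = 1 := by
  obtain ⟨⟨hmem, hchain⟩, hsum⟩ := hg
  obtain ⟨a, q, rfl⟩ := exists_cons_of_ne_nil hne
  rw [bounded02_iff, boundedFrom_cons, zero_add] at hb
  obtain rfl : a = 1 := by
    have := hb.2.start
    have := hmem a mem_cons_self
    omega
  obtain rfl | ⟨w, d, rfl⟩ := eq_nil_or_concat q
  · simp at hsum
  rw [concat_eq_append] at *
  obtain ⟨hbw, hbd⟩ := boundedFrom_append.1 hb.2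
  have hd : d = -(1 + w.sum) := by simp at hsum; omega
  subst hd
  obtain ⟨hcw, -, hlast⟩ := isChain_append.1 hchain.tail
  refine ⟨w, rfl, ⟨fun x hx => hmem x (by simp [hx]), hcw⟩, hbw, fun x hx => ?_⟩
  have := hbd.start
  have := hlast x hx (-(1 + w.sum)) rfl
  omega

end frame

theorem decode_valid {c : List ℕ} (hc : ∀ m ∈ c, 0 < m) (halt : AltParity c) :
    IsGDAP (decode c) ∧ Bounded02 (decode c) := by
  obtain ⟨hgood, hlast⟩ := goodSteps_flatten_blocks one_pos hc
  obtain ⟨hb, hs⟩ := boundedFrom_flatten_blocks hc halt (Or.inl rfl)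
  exact frame_valid hgood hb (by omega) hlast

theorem length_decode (c : List ℕ) : (decode c).length = c.sum + 2 := by
  rw [decode, length_frame, length_flatten_blocks]

theorem cutLengths_decode {c : List ℕ} (hc : ∀ m ∈ c, 0 < m) (halt : AltParity c) :
    cutLengths (decode c).tail.dropLast = c := by
  rw [decode, frame_tail_dropLast, cutLengths_flatten_blocks one_pos hc halt]

theorem isChain_isCut_or_stepAfter {h : ℤ} {w : List ℤ} (hw : GoodSteps w)
    (hb : BoundedFrom h w) : w.IsChain fun x y => IsCut x y ∨ y = stepAfter x :=
  hw.2.imp_of_mem_imp fun x y _ hy hxy => by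
    have := hw.1 y hy
    have := hb.step_mem hy
    unfold IsCut stepAfter
    split_ifs <;> omega

theorem isChain_stepAfter_of_isChain_notCut {g : List ℤ}
    (hQ : g.IsChain fun x y => IsCut x y ∨ y = stepAfter x)
    (hcut : g.IsChain fun x y => notCut x y) : g.IsChain fun x y => y = stepAfter x :=
  (hQ.and hcut).imp fun x y ⟨hxy, hn⟩ =>
    hxy.resolve_left fun hc => by simp [notCut_eq_false.2 hc] at hn

theorem eq_block_of_isChain {h : ℤ} {g : List ℤ} (hg : g ≠ [])
    (hchain : g.IsChain fun x y => y = stepAfter x)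
    (hstart : (h = 1 ∧ ∀ a ∈ g.head?, a = 1 ∨ a ≤ -1) ∨ (h = 2 ∧ ∀ a ∈ g.head?, a = 1 ∨ a = -2))
    (hb : BoundedFrom h g) (hlast : ∀ x ∈ g.getLast?, x = 1) :
    g = block h g.length ∧ (h = 1 ∨ h = 2 ∧ g.length % 2 = 0) := by
  obtain ⟨a, t, rfl⟩ := exists_cons_of_ne_nil hg
  have hiter := eq_iterate_of_isChain hchain
  have hpar : (t.length % 2 = 0 ↔ a = 1) := by
    rw [← stepAfter_iterate_eq_one]
    exact hlast _ (hiter ▸ getLast?_iterate _ _ _)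
  have ha := (boundedFrom_cons.1 hb).2.start
  simp only [head?_cons, Option.mem_def, Option.some.injEq, forall_eq'] at hstart
  rw [length_cons]
  refine ⟨hiter.trans (congrArg (iterate stepAfter · _) ?_), by omega⟩
  unfold blockHead
  split_ifs <;> omega

theorem parity_ne_of_blockHead {m m' : ℕ}
    (hcut : blockHead (nextHeight m) m' = 1 ∨ blockHead (nextHeight m) m' = -2)
    (hb : nextHeight m + blockHead (nextHeight m) m' ≤ 2) : m % 2 ≠ m' % 2 := by
  unfold blockHead nextHeight at hcut hb
  by_cases hm : m % 2 = 1 <;> by_cases hm' : m' % 2 = 1 <;> simp [hm, hm'] at hcut hb <;> omega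

theorem blocks_map_length {L : List (List ℤ)} {h : ℤ} (hL : L.flatten.splitBy notCut = L)
    (hQ : L.flatten.IsChain fun x y => IsCut x y ∨ y = stepAfter x)
    (hstart : (h = 1 ∧ ∀ a ∈ L.flatten.head?, a = 1 ∨ a ≤ -1) ∨
      (h = 2 ∧ ∀ a ∈ L.flatten.head?, a = 1 ∨ a = -2))
    (hb : BoundedFrom h L.flatten) (hlast : ∀ x ∈ L.flatten.getLast?, x = 1) :
    blocks h (L.map length) = L ∧ AltParity (L.map length) := by
  induction L generalizing h with
  | nil => exact ⟨rfl, isChain_nil⟩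
  | cons g L ih =>
    obtain ⟨hg, hcut, hL', hbound⟩ := splitBy_flatten_cons hL
    rw [flatten_cons] at hQ hstart hb hlast
    obtain ⟨hQg, hQL, -⟩ := isChain_append.1 hQ
    obtain ⟨hbg, hbL⟩ := boundedFrom_append.1 hb
    have hnext : ∀ y ∈ L.flatten.head?, y = 1 ∨ y = -2 := fun y hy =>
      (notCut_eq_false.1 (hbound _ (getLast?_eq_some_getLast hg) y hy)).2
    have hlast_g : ∀ x ∈ g.getLast?, x = 1 := fun x hx => by
      cases hF : L.flatten with
      | nil => exact hlast x (by simpa [hF] using hx)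
      | cons y F => exact (notCut_eq_false.1 (hbound x hx y (by simp [hF]))).1
    obtain ⟨hgeq, hadm⟩ := eq_block_of_isChain hg (isChain_stepAfter_of_isChain_notCut hQg hcut)
      (by simpa [head?_append_of_ne_nil _ hg] using hstart) hbg hlast_g
    rw [hgeq, (boundedFrom_block hadm (length_pos_of_ne_nil hg)).2] at hbL
    have hstart' : (nextHeight g.length = 1 ∧ ∀ a ∈ L.flatten.head?, a = 1 ∨ a ≤ -1) ∨
        (nextHeight g.length = 2 ∧ ∀ a ∈ L.flatten.head?, a = 1 ∨ a = -2) := by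
      unfold nextHeight
      split_ifs
      · exact Or.inr ⟨rfl, hnext⟩
      · exact Or.inl ⟨rfl, fun a ha => by rcases hnext a ha with h | h <;> omega⟩
    obtain ⟨ihL, ihalt⟩ := ih hL' hQL hstart' hbL
      (fun x hx => hlast x (by rw [getLast?_append, Option.mem_def.1 hx]; rfl))
    refine ⟨by rw [map_cons, blocks, ihL, ← hgeq], ?_⟩
    cases L with
    | nil => exact isChain_singleton _
    | cons g' L =>
      have hg' : 0 < g'.length := length_pos_of_ne_nil (splitBy_flatten_cons hL').1
      have hhead : (g' :: L).flatten.head? = some (blockHead (nextHeight g.length) g'.length) := by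
        rw [← ihL, map_cons, blocks, flatten_cons, head?_append_of_ne_nil _ (block_ne_nil hg'),
          head?_block hg']
      exact isChain_cons_cons.2
        ⟨parity_ne_of_blockHead (hnext _ hhead) (hbL.head_step hhead).2, ihalt⟩

theorem decode_cutLengths {w : List ℤ} (hw : GoodSteps w) (hb : BoundedFrom 1 w)
    (hl : ∀ x ∈ w.getLast?, x = 1) :
    decode (cutLengths w) = frame w ∧ AltParity (cutLengths w) := by
  have hL : (w.splitBy notCut).flatten = w := flatten_splitBy _ _
  obtain ⟨hblocks, halt⟩ := blocks_map_length (L := w.splitBy notCut) (h := 1) (by rw [hL])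
    (by rw [hL]; exact isChain_isCut_or_stepAfter hw hb)
    (Or.inl ⟨rfl, fun a ha => hw.1 a (mem_of_mem_head? (by rwa [hL] at ha))⟩) (by rwa [hL])
    (by rwa [hL])
  exact ⟨by rw [decode, cutLengths, hblocks, hL], halt⟩

end BoundedGDAP

open BoundedGDAP

/-- for `n ≥ 2` there is a bijection `ψ` from GDAP of length `n` bounded by
`y = 0` and `y = 2` onto compositions of `n-2` with no two consecutive parts of the same
parity, obtained by deleting the first and last steps and recording the block lengths of
the cutting decomposition. -/
theorem stmt13 : ∀ n : ℕ, 2 ≤ n →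
    ∃ ψ : {p : List ℤ // IsGDAP p ∧ p ≠ [] ∧ Bounded02 p ∧ p.length = n} ≃
          {c : List ℕ // IsComposition c (n - 2) ∧ AltParity c},
      ∀ p : {p : List ℤ // IsGDAP p ∧ p ≠ [] ∧ Bounded02 p ∧ p.length = n},
        CutComp (p.1.tail.dropLast) (ψ p).1 := by
  intro n hn
  have hparse : ∀ p : {p : List ℤ // IsGDAP p ∧ p ≠ [] ∧ Bounded02 p ∧ p.length = n},
      decode (cutLengths p.1.tail.dropLast) = p.1 ∧ AltParity (cutLengths p.1.tail.dropLast) := by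
    rintro ⟨p, hg, hne, hb, -⟩
    obtain ⟨w, rfl, hw, hbw, hl⟩ := exists_eq_frame hg hne hb
    rw [frame_tail_dropLast]
    exact decode_cutLengths hw hbw hl
  have hcomp : ∀ p : {p : List ℤ // IsGDAP p ∧ p ≠ [] ∧ Bounded02 p ∧ p.length = n},
      IsComposition (cutLengths p.1.tail.dropLast) (n - 2) := fun p => by
    obtain ⟨hpos, hsum⟩ := (cutComp_cutLengths p.1.tail.dropLast).1
    exact ⟨hpos, by simp [hsum, p.2.2.2.2]; omega⟩
  refine ⟨⟨fun p => ⟨cutLengths p.1.tail.dropLast, hcomp p, (hparse p).2⟩,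
    fun c => ⟨decode c.1, ?_⟩, fun p => Subtype.ext (hparse p).1,
    fun c => Subtype.ext (cutLengths_decode c.2.1.1 c.2.2)⟩, fun p => cutComp_cutLengths _⟩
  have hlen : (decode c.1).length = n := by rw [length_decode, c.2.1.2]; omega
  obtain ⟨hg, hb⟩ := decode_valid c.2.1.1 c.2.2
  exact ⟨hg, List.ne_nil_of_length_pos (by omega), hb, hlen⟩
end

section
/- The number of compositions of m into parts such that no two consecutive parts have the same parity, for m = 0,1,2,...,8, is 1, 1, 1, 3, 2, 6, 6, 11, 16; in particular it equals the number of GDAP of length m+2 bounded between y = 0 and y = 2. -/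
open PowerSeries

/-- Number of compositions of `m` with no two consecutive parts of the same parity. -/
noncomputable def altCompCount (m : ℕ) : ℕ :=
  Nat.card {c : List ℕ // IsComposition c m ∧ AltParity c}

/-!
Split the alternating compositions of `m` by the parity of the first part: `E m` (first part
even, or `m = 0`) and `O m` (first part odd). Deleting a first part `1` or `2`, or lowering a
larger first part by `2`, gives `O (m + 2) ≃ E (m + 1) ⊕ O m` and `E (m + 2) ≃ O m ⊕ E m`.
Paths bounded by `y = 0` and `y = 2` that start at height `0`, resp. at height `2` right after
an up-step, obey the same recurrences: from `0` a path begins with `UU` or `UD₁`, from `2` with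
`D₂` or `D₁U`. Hence both sides equal `#E (m + 2) = #O m + #E m`.
-/

def headCounts : ℕ → ℕ × ℕ
  | 0 => (1, 0)
  | 1 => (0, 1)
  | n + 2 => ((headCounts n).2 + (headCounts n).1, (headCounts (n + 1)).1 + (headCounts n).2)

theorem eq_headCounts {M : Type*} [AddMonoidWithOne M] {a b : ℕ → M}
    (ha₀ : a 0 = 1) (ha₁ : a 1 = 0) (hb₀ : b 0 = 0) (hb₁ : b 1 = 1)
    (ha : ∀ n, a (n + 2) = b n + a n) (hb : ∀ n, b (n + 2) = a (n + 1) + b n) (n : ℕ) :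
    a n = (headCounts n).1 ∧ b n = (headCounts n).2 := by
  induction n using Nat.twoStepInduction with
  | zero => simp [headCounts, ha₀, hb₀]
  | one => simp [headCounts, ha₁, hb₁]
  | more n ih ih' => simp [headCounts, ha, hb, ih.1, ih.2, ih'.1]

theorem encard_image_union_image {α β γ : Type*} {f : α → γ} {g : β → γ} {s : Set α}
    {t : Set β} (hf : Set.InjOn f s) (hg : Set.InjOn g t) (hst : Disjoint (f '' s) (g '' t)) :
    (f '' s ∪ g '' t).encard = s.encard + t.encard := by
  rw [Set.encard_union_eq hst, hf.encard_image, hg.encard_image]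

section Compositions

theorem altParity_nil : AltParity [] := List.isChain_nil

theorem altParity_cons {x : ℕ} {c : List ℕ} :
    AltParity (x :: c) ↔ (∀ y ∈ c.head?, x % 2 ≠ y % 2) ∧ AltParity c :=
  List.isChain_cons

def altComps (m : ℕ) : Set (List ℕ) := {c | IsComposition c m ∧ AltParity c}

def altCompsHeadEven (m : ℕ) : Set (List ℕ) :=
  {c | IsComposition c m ∧ AltParity c ∧ ∀ x ∈ c.head?, x % 2 = 0}

def altCompsHeadOdd (m : ℕ) : Set (List ℕ) :=
  {c | IsComposition c m ∧ AltParity c ∧ ∃ x ∈ c.head?, x % 2 = 1}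

theorem altComps_eq_union (m : ℕ) : altComps m = altCompsHeadOdd m ∪ altCompsHeadEven m := by
  ext (_ | ⟨x, c⟩)
  · simp [altComps, altCompsHeadOdd, altCompsHeadEven]
  · have := Nat.mod_two_eq_zero_or_one x
    simp only [altComps, altCompsHeadOdd, altCompsHeadEven, Set.mem_union, Set.mem_ofPred_eq,
      List.head?_cons, Option.mem_def, Option.some.injEq, forall_eq', exists_eq_left']
    tauto

theorem disjoint_altCompsHeadOdd_altCompsHeadEven (m : ℕ) :
    Disjoint (altCompsHeadOdd m) (altCompsHeadEven m) := by
  rw [Set.disjoint_left]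
  rintro c ⟨-, -, x, hx, hodd⟩ ⟨-, -, heven⟩
  exact absurd (heven x hx) (by omega)

theorem cons_mem_altCompsHeadEven {x m : ℕ} {c : List ℕ} :
    x :: c ∈ altCompsHeadEven m ↔ x % 2 = 0 ∧ 0 < x ∧ (∀ y ∈ c, 0 < y) ∧ x + c.sum = m ∧
      (∀ y ∈ c.head?, x % 2 ≠ y % 2) ∧ AltParity c := by
  simp only [altCompsHeadEven, IsComposition, Set.mem_ofPred_eq, List.forall_mem_cons,
    List.sum_cons, altParity_cons, List.head?_cons, Option.mem_def, Option.some.injEq,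
    forall_eq']
  tauto

theorem cons_mem_altCompsHeadOdd {x m : ℕ} {c : List ℕ} :
    x :: c ∈ altCompsHeadOdd m ↔ x % 2 = 1 ∧ 0 < x ∧ (∀ y ∈ c, 0 < y) ∧ x + c.sum = m ∧
      (∀ y ∈ c.head?, x % 2 ≠ y % 2) ∧ AltParity c := by
  simp only [altCompsHeadOdd, IsComposition, Set.mem_ofPred_eq, List.forall_mem_cons,
    List.sum_cons, altParity_cons, List.head?_cons, Option.mem_def, Option.some.injEq,
    exists_eq_left']
  tauto

theorem nil_mem_altCompsHeadEven {m : ℕ} : [] ∈ altCompsHeadEven m ↔ m = 0 := by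
  simp [altCompsHeadEven, IsComposition, altParity_nil, eq_comm]

theorem nil_notMem_altCompsHeadOdd {m : ℕ} : [] ∉ altCompsHeadOdd m := by
  simp [altCompsHeadOdd]

theorem one_cons_mem_altCompsHeadOdd {m : ℕ} {c : List ℕ} :
    1 :: c ∈ altCompsHeadOdd (m + 1) ↔ c ∈ altCompsHeadEven m := by
  rcases c with _ | ⟨x, c⟩
  · simp [cons_mem_altCompsHeadOdd, nil_mem_altCompsHeadEven, altParity_nil]
  · simp only [cons_mem_altCompsHeadOdd, cons_mem_altCompsHeadEven, altParity_cons,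
      List.forall_mem_cons, List.head?_cons, Option.mem_def, Option.some.injEq, forall_eq']
    grind

theorem two_cons_mem_altCompsHeadEven {m : ℕ} {c : List ℕ} :
    2 :: c ∈ altCompsHeadEven (m + 2) ↔ c ∈ altCompsHeadOdd m ∨ c = [] ∧ m = 0 := by
  rcases c with _ | ⟨x, c⟩
  · simp [cons_mem_altCompsHeadEven, nil_notMem_altCompsHeadOdd, altParity_nil]
  · simp only [cons_mem_altCompsHeadOdd, cons_mem_altCompsHeadEven, altParity_cons,
      List.forall_mem_cons, List.head?_cons, Option.mem_def, Option.some.injEq, forall_eq',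
      reduceCtorEq, false_and, or_false]
    grind

theorem add_two_cons_mem_altCompsHeadOdd {x m : ℕ} {c : List ℕ} :
    (x + 2) :: c ∈ altCompsHeadOdd (m + 2) ↔ x :: c ∈ altCompsHeadOdd m := by
  simp only [cons_mem_altCompsHeadOdd, Nat.add_mod_right]
  grind

theorem add_two_cons_mem_altCompsHeadEven {x m : ℕ} {c : List ℕ} (hx : 0 < x) :
    (x + 2) :: c ∈ altCompsHeadEven (m + 2) ↔ x :: c ∈ altCompsHeadEven m := by
  simp only [cons_mem_altCompsHeadEven, Nat.add_mod_right]
  grind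

theorem altCompsHeadEven_zero : altCompsHeadEven 0 = {[]} := by
  ext (_ | ⟨x, c⟩)
  · simp [nil_mem_altCompsHeadEven]
  · simp only [cons_mem_altCompsHeadEven, Set.mem_singleton_iff, reduceCtorEq, iff_false]
    omega

theorem altCompsHeadEven_one : altCompsHeadEven 1 = ∅ := by
  ext (_ | ⟨x, c⟩)
  · simp [nil_mem_altCompsHeadEven]
  · simp only [cons_mem_altCompsHeadEven, Set.mem_empty_iff_false, iff_false]
    omega

theorem altCompsHeadOdd_zero : altCompsHeadOdd 0 = ∅ := by
  ext (_ | ⟨x, c⟩)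
  · simp [nil_notMem_altCompsHeadOdd]
  · simp only [cons_mem_altCompsHeadOdd, Set.mem_empty_iff_false, iff_false]
    omega

theorem altCompsHeadOdd_one : altCompsHeadOdd 1 = {[1]} := by
  ext (_ | ⟨_ | _ | x, c⟩)
  · simp [nil_notMem_altCompsHeadOdd]
  · simp [cons_mem_altCompsHeadOdd]
  · simp [one_cons_mem_altCompsHeadOdd, altCompsHeadEven_zero]
  · simp only [cons_mem_altCompsHeadOdd, Set.mem_singleton_iff, List.cons.injEq]
    omega

def bumpHead : List ℕ → List ℕ
  | [] => [2]
  | x :: c => (x + 2) :: c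

theorem bumpHead_injOn : Set.InjOn bumpHead {c | ∀ x ∈ c, 0 < x} := by
  rintro (_ | ⟨x, c⟩) hc (_ | ⟨y, d⟩) hd h <;> simp_all [bumpHead]

theorem altCompsHeadOdd_add_two (m : ℕ) : altCompsHeadOdd (m + 2) =
    (1 :: ·) '' altCompsHeadEven (m + 1) ∪ bumpHead '' altCompsHeadOdd m := by
  apply subset_antisymm
  · rintro (_ | ⟨_ | _ | y, c⟩) hc
    · exact absurd hc nil_notMem_altCompsHeadOdd
    · simp [cons_mem_altCompsHeadOdd] at hc
    · exact Or.inl ⟨c, one_cons_mem_altCompsHeadOdd.1 hc, rfl⟩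
    · exact Or.inr ⟨y :: c, add_two_cons_mem_altCompsHeadOdd.1 hc, rfl⟩
  · rintro _ (⟨c, hc, rfl⟩ | ⟨_ | ⟨y, c⟩, hc, rfl⟩)
    · exact one_cons_mem_altCompsHeadOdd.2 hc
    · exact absurd hc nil_notMem_altCompsHeadOdd
    · exact add_two_cons_mem_altCompsHeadOdd.2 hc

theorem altCompsHeadEven_add_two (m : ℕ) : altCompsHeadEven (m + 2) =
    (2 :: ·) '' altCompsHeadOdd m ∪ bumpHead '' altCompsHeadEven m := by
  apply subset_antisymm
  · rintro (_ | ⟨_ | _ | _ | y, c⟩) hc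
    · simp [nil_mem_altCompsHeadEven] at hc
    · simp [cons_mem_altCompsHeadEven] at hc
    · simp [cons_mem_altCompsHeadEven] at hc
    · rcases two_cons_mem_altCompsHeadEven.1 hc with hc | ⟨rfl, rfl⟩
      · exact Or.inl ⟨c, hc, rfl⟩
      · exact Or.inr ⟨[], nil_mem_altCompsHeadEven.2 rfl, rfl⟩
    · exact Or.inr ⟨(y + 1) :: c, (add_two_cons_mem_altCompsHeadEven y.succ_pos).1 hc, rfl⟩
  · rintro _ (⟨c, hc, rfl⟩ | ⟨_ | ⟨y, c⟩, hc, rfl⟩)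
    · exact two_cons_mem_altCompsHeadEven.2 (Or.inl hc)
    · obtain rfl := nil_mem_altCompsHeadEven.1 hc
      exact two_cons_mem_altCompsHeadEven.2 (Or.inr ⟨rfl, rfl⟩)
    · exact (add_two_cons_mem_altCompsHeadEven (cons_mem_altCompsHeadEven.1 hc).2.1).2 hc

theorem encard_altCompsHeadOdd_add_two (m : ℕ) :
    (altCompsHeadOdd (m + 2)).encard =
      (altCompsHeadEven (m + 1)).encard + (altCompsHeadOdd m).encard := by
  rw [altCompsHeadOdd_add_two]
  refine encard_image_union_image List.cons_injective.injOn
    (bumpHead_injOn.mono fun c hc => hc.1.1) ?_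
  rw [Set.disjoint_left]
  rintro _ ⟨c, -, rfl⟩ ⟨_ | ⟨x, d⟩, -, h⟩ <;> simp [bumpHead] at h

theorem encard_altCompsHeadEven_add_two (m : ℕ) :
    (altCompsHeadEven (m + 2)).encard =
      (altCompsHeadOdd m).encard + (altCompsHeadEven m).encard := by
  rw [altCompsHeadEven_add_two]
  refine encard_image_union_image List.cons_injective.injOn
    (bumpHead_injOn.mono fun c hc => hc.1.1) ?_
  rw [Set.disjoint_left]
  rintro _ ⟨c, hc, rfl⟩ ⟨_ | ⟨x, d⟩, hd, h⟩
  · obtain rfl : c = [] := by simpa [bumpHead] using h.symm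
    exact nil_notMem_altCompsHeadOdd hc
  · simp only [bumpHead, List.cons.injEq] at h
    have := (cons_mem_altCompsHeadEven.1 hd).2.1
    omega

theorem encard_altCompsHead (n : ℕ) :
    (altCompsHeadEven n).encard = (headCounts n).1 ∧
      (altCompsHeadOdd n).encard = (headCounts n).2 := by
  refine eq_headCounts (a := fun n => (altCompsHeadEven n).encard)
    (b := fun n => (altCompsHeadOdd n).encard) ?_ ?_ ?_ ?_
    encard_altCompsHeadEven_add_two encard_altCompsHeadOdd_add_two n
  · simp [altCompsHeadEven_zero]
  · simp [altCompsHeadEven_one]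
  · simp [altCompsHeadOdd_zero]
  · simp [altCompsHeadOdd_one]

theorem altCompCount_eq (m : ℕ) : altCompCount m = (headCounts (m + 2)).1 := by
  have hcard : altCompCount m = (altComps m).encard.toNat := Nat.card_coe_set_eq _
  rw [hcard, altComps_eq_union,
    Set.encard_union_eq (disjoint_altCompsHeadOdd_altCompsHeadEven m),
    (encard_altCompsHead m).1, (encard_altCompsHead m).2]
  rfl

end Compositions

section Paths

theorem forall_sum_take_cons {α : Type*} [AddMonoid α] {P : α → Prop} {s : α} {t : List α} :
    (∀ i, P ((s :: t).take i).sum) ↔ P 0 ∧ ∀ i, P (s + (t.take i).sum) :=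
  ⟨fun h => ⟨h 0, fun i => h (i + 1)⟩, fun ⟨h₀, h⟩ i => by cases i <;> simp [h₀, h]⟩

/-- The steps `p` continue, inside the strip `0 ≤ y ≤ 2` and down to the x-axis, a path that is
at height `h` and whose last step was `prev`. -/
def IsBoundedTail : ℤ → ℤ → List ℤ → Prop
  | h, _, [] => h = 0
  | h, prev, s :: p => (s = 1 ∨ s ≤ -1) ∧ (prev = 1 ∨ s = 1) ∧ 0 ≤ h + s ∧ h + s ≤ 2 ∧
      IsBoundedTail (h + s) s p

theorem isBoundedTail_iff {h prev : ℤ} {p : List ℤ} (h₀ : 0 ≤ h) (h₂ : h ≤ 2) :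
    IsBoundedTail h prev p ↔ (∀ s ∈ p, s = 1 ∨ s ≤ -1) ∧
      List.IsChain (fun a b => a = 1 ∨ b = 1) (prev :: p) ∧ h + p.sum = 0 ∧
      ∀ i, 0 ≤ h + (p.take i).sum ∧ h + (p.take i).sum ≤ 2 := by
  induction p generalizing h prev with
  | nil => simp [IsBoundedTail, h₀, h₂]
  | cons s p ih =>
    simp only [IsBoundedTail, List.forall_mem_cons, List.isChain_cons_cons, List.sum_cons,
      forall_sum_take_cons (P := fun x => 0 ≤ h + x ∧ h + x ≤ 2)]
    constructor
    · rintro ⟨hs, hprev, hs₀, hs₂, hp⟩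
      have := (ih hs₀ hs₂).1 hp
      grind
    · rintro ⟨⟨hs, hp⟩, ⟨hprev, hchain⟩, hsum, -, htake⟩
      have h1 := htake 0
      simp only [List.take_zero, List.sum_nil, add_zero] at h1
      refine ⟨hs, hprev, by omega, by omega, (ih (by omega) (by omega)).2 ⟨hp, hchain, ?_, ?_⟩⟩
      · omega
      · intro i; have := htake i; omega

theorem isBoundedTail_zero_cons {prev s : ℤ} {p : List ℤ} :
    IsBoundedTail 0 prev (s :: p) ↔ s = 1 ∧ IsBoundedTail 1 1 p := by
  simp only [IsBoundedTail]
  grind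

theorem isBoundedTail_zero_iff {prev : ℤ} {p : List ℤ} :
    IsBoundedTail 0 prev p ↔ IsBoundedTail 0 1 p := by
  rcases p with _ | ⟨s, p⟩
  · rfl
  · rw [isBoundedTail_zero_cons, isBoundedTail_zero_cons]

theorem isBoundedTail_one_up_cons {s : ℤ} {p : List ℤ} :
    IsBoundedTail 1 1 (s :: p) ↔
      s = 1 ∧ IsBoundedTail 2 1 p ∨ s = -1 ∧ IsBoundedTail 0 1 p := by
  simp only [IsBoundedTail]
  grind [isBoundedTail_zero_iff]

theorem isBoundedTail_one_down_cons {s : ℤ} {p : List ℤ} :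
    IsBoundedTail 1 (-1) (s :: p) ↔ s = 1 ∧ IsBoundedTail 2 1 p := by
  simp only [IsBoundedTail]
  grind

theorem isBoundedTail_two_cons {s : ℤ} {p : List ℤ} :
    IsBoundedTail 2 1 (s :: p) ↔
      s = -1 ∧ IsBoundedTail 1 (-1) p ∨ s = -2 ∧ IsBoundedTail 0 1 p := by
  simp only [IsBoundedTail]
  grind [isBoundedTail_zero_iff]

def boundedTails (h : ℤ) (n : ℕ) : Set (List ℤ) := {p | IsBoundedTail h 1 p ∧ p.length = n}

theorem boundedTails_zero_add_two (n : ℕ) : boundedTails 0 (n + 2) =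
    (fun p => 1 :: 1 :: p) '' boundedTails 2 n ∪
      (fun p => 1 :: -1 :: p) '' boundedTails 0 n := by
  ext (_ | ⟨a, _ | ⟨b, p⟩⟩) <;>
    simp [boundedTails, isBoundedTail_zero_cons, isBoundedTail_one_up_cons]
  grind

theorem boundedTails_two_add_two (n : ℕ) : boundedTails 2 (n + 2) =
    (-2 :: ·) '' boundedTails 0 (n + 1) ∪ (fun p => -1 :: 1 :: p) '' boundedTails 2 n := by
  ext (_ | ⟨a, _ | ⟨b, p⟩⟩) <;>
    simp [boundedTails, isBoundedTail_two_cons, isBoundedTail_one_down_cons]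
  grind

theorem boundedTails_zero_zero : boundedTails 0 0 = {[]} := by
  ext (_ | ⟨a, p⟩) <;> simp [boundedTails, IsBoundedTail]

theorem boundedTails_zero_one : boundedTails 0 1 = ∅ := by
  ext (_ | ⟨a, _ | ⟨b, p⟩⟩) <;> simp [boundedTails, IsBoundedTail]
  omega

theorem boundedTails_two_zero : boundedTails 2 0 = ∅ := by
  ext (_ | ⟨a, p⟩) <;> simp [boundedTails, IsBoundedTail]

theorem boundedTails_two_one : boundedTails 2 1 = {[-2]} := by
  ext (_ | ⟨a, _ | ⟨b, p⟩⟩) <;> simp [boundedTails, IsBoundedTail]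
  omega

theorem encard_boundedTails_zero_add_two (n : ℕ) :
    (boundedTails 0 (n + 2)).encard =
      (boundedTails 2 n).encard + (boundedTails 0 n).encard := by
  rw [boundedTails_zero_add_two]
  refine encard_image_union_image (List.cons_injective.comp List.cons_injective).injOn
    (List.cons_injective.comp List.cons_injective).injOn ?_
  rw [Set.disjoint_left]
  rintro _ ⟨p, -, rfl⟩ ⟨q, -, h⟩
  simp at h

theorem encard_boundedTails_two_add_two (n : ℕ) :
    (boundedTails 2 (n + 2)).encard =
      (boundedTails 0 (n + 1)).encard + (boundedTails 2 n).encard := by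
  rw [boundedTails_two_add_two]
  refine encard_image_union_image List.cons_injective.injOn
    (List.cons_injective.comp List.cons_injective).injOn ?_
  rw [Set.disjoint_left]
  rintro _ ⟨p, -, rfl⟩ ⟨q, -, h⟩
  simp at h

theorem encard_boundedTails (n : ℕ) :
    (boundedTails 0 n).encard = (headCounts n).1 ∧
      (boundedTails 2 n).encard = (headCounts n).2 := by
  refine eq_headCounts (a := fun n => (boundedTails 0 n).encard)
    (b := fun n => (boundedTails 2 n).encard) ?_ ?_ ?_ ?_ (fun n => ?_) (fun n => ?_) n
  · simp [boundedTails_zero_zero]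
  · simp [boundedTails_zero_one]
  · simp [boundedTails_two_zero]
  · simp [boundedTails_two_one]
  · exact encard_boundedTails_zero_add_two n
  · exact encard_boundedTails_two_add_two n

theorem setOf_g02_eq_boundedTails (n : ℕ) :
    {p : List ℤ | IsGDAP p ∧ p ≠ [] ∧ Bounded02 p ∧ p.length = n + 1} =
      boundedTails 0 (n + 1) := by
  ext p
  rw [Set.mem_ofPred_eq, boundedTails, Set.mem_ofPred_eq, isBoundedTail_iff le_rfl zero_le_two]
  simp only [IsGDAP, GoodSteps, Bounded02, List.isChain_cons, true_or, implies_true, true_and,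
    zero_add, ← List.length_pos_iff]
  constructor
  · rintro ⟨⟨⟨hs, hchain⟩, hsum⟩, -, hb, hl⟩
    exact ⟨⟨hs, hchain, hsum, hb⟩, hl⟩
  · rintro ⟨⟨hs, hchain, hsum, hb⟩, hl⟩
    exact ⟨⟨⟨hs, hchain⟩, hsum⟩, by omega, hb, hl⟩

theorem g02Count_eq (m : ℕ) : g02Count (m + 2) = (headCounts (m + 2)).1 := by
  have hcard : g02Count (m + 2) = (boundedTails 0 (m + 2)).encard.toNat := by
    rw [← setOf_g02_eq_boundedTails]
    exact Nat.card_coe_set_eq _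
  rw [hcard, (encard_boundedTails _).1]
  rfl

end Paths

/-- the number of compositions of `m` with no two consecutive parts of the
same parity is `1, 1, 1, 3, 2, 6, 6, 11, 16` for `m = 0,…,8`, and it equals the number of
GDAP of length `m+2` bounded by `y = 0` and `y = 2`. -/
theorem stmt14 :
    altCompCount 0 = 1 ∧ altCompCount 1 = 1 ∧ altCompCount 2 = 1 ∧ altCompCount 3 = 3 ∧
    altCompCount 4 = 2 ∧ altCompCount 5 = 6 ∧ altCompCount 6 = 6 ∧ altCompCount 7 = 11 ∧
    altCompCount 8 = 16 ∧
    ∀ m : ℕ, altCompCount m = g02Count (m + 2) := by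
  simp only [altCompCount_eq, g02Count_eq, implies_true, and_true]
  decide
end
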